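/- arXiv:1005.1893 — 5 statements merged into one kernel-verified Lean document; each statement's English description precedes it below -/
import Mathlib

section
/- Let a = (a₁,…,aₙ) ∈ [0,1]ⁿ be a sequence with pairwise distinct entries. Then LAₙ(a) equals the number of local maxima of a plus the number of local minima of a. -/
open MeasureTheory Filter Finset

noncomputable section

attribute [local instance] Classical.propDecidable

/-- A list of values is alternating (starting with a descent):
`l 0 > l 1 < l 2 > l 3 < ⋯`. -/
def IsAltList {α : Type*} [LT α] (l : List α) : Prop :=
  ∀ i : ℕ, ∀ h : i + 1 < l.length,
    if i % 2 = 0 then l[i+1]'h < l[i]'(Nat.lt_of_succ_lt h)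
    else l[i]'(Nat.lt_of_succ_lt h) < l[i+1]'h

/-- The length of the longest alternating subsequence of `a` along the index
set `s`: the largest `m` for which there is an increasing list of `m` indices,
all belonging to `s`, along which `a` alternates (starting with a descent). -/
def LAon {α : Type*} [LinearOrder α] (a : ℕ → α) (s : Finset ℕ) : ℕ :=
  sSup {m | ∃ l : List ℕ, l.length = m ∧ l.Chain' (· < ·) ∧ (∀ i ∈ l, i ∈ s) ∧
    IsAltList (l.map a)}

/-- `a = (a 1, …, a n)` has a local maximum at the index `k`:
(i) `a k > a (k+1)` or `k = n`, and (ii) `a k > a (k-1)` or `k = 1`. -/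
def LocalMaxAt (a : ℕ → ℝ) (n k : ℕ) : Prop :=
  (a (k + 1) < a k ∨ k = n) ∧ (a (k - 1) < a k ∨ k = 1)

/-- `a = (a 1, …, a n)` has a local minimum at the index `k`:
(i) `a k < a (k+1)` or `k = n`, and (ii) `a k < a (k-1)` and `k > 1`. -/
def LocalMinAt (a : ℕ → ℝ) (n k : ℕ) : Prop :=
  (a k < a (k + 1) ∨ k = n) ∧ (a k < a (k - 1) ∧ 1 < k)

/-! An alternating subsequence `i₁ < ⋯ < i_m` yields `m` distinct local extrema: for odd `k` the
maximum, for even `k` the minimum, of `a` on the window `(i_{k-1}, i_{k+1})` (with `i₀ = 0` and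
`i_{m+1} = n + 1`) is a local extremum, because `a i_k` beats both ends of the window. Windows of
the same parity are disjoint and neighbouring windows carry extrema of opposite kinds, so these
extrema are distinct. Conversely, `a` is monotone between two consecutive extrema, so the
extrema, listed in increasing order, alternate between maxima and minima, starting with a
maximum: they form an alternating subsequence. -/

lemma List.SortedLT.getElem_succ_le_of_lt {α : Type*} [LinearOrder α] {l : List α}
    (hl : l.SortedLT) {i : ℕ} (hi : i + 1 < l.length) {x : α} (hx : x ∈ l)
    (h : l[i] < x) : l[i + 1] ≤ x := by
  obtain ⟨k, hk, rfl⟩ := List.getElem_of_mem hx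
  rw [hl.getElem_lt_getElem_iff] at h
  exact hl.getElem_le_getElem_iff.2 h

def extrema (a : ℕ → ℝ) (n : ℕ) : Finset ℕ :=
  (Icc 1 n).filter fun k => LocalMaxAt a n k ∨ LocalMinAt a n k

def extremaList (a : ℕ → ℝ) (n : ℕ) : List ℕ := (extrema a n).sort

section

variable {a : ℕ → ℝ} {n : ℕ}

lemma not_localMaxAt_of_localMinAt {k : ℕ} (h : LocalMinAt a n k) : ¬ LocalMaxAt a n k := by
  rintro ⟨-, h' | h'⟩
  · exact lt_asymm h.2.1 h'
  · exact absurd h.2.2 (by omega)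

lemma card_extrema : (extrema a n).card =
    ((Icc 1 n).filter (LocalMaxAt a n)).card + ((Icc 1 n).filter (LocalMinAt a n)).card := by
  rw [extrema, filter_or, card_union_of_disjoint]
  exact disjoint_filter.2 fun k _ hmax hmin => not_localMaxAt_of_localMinAt hmin hmax

lemma localMaxAt_neg_iff {k : ℕ} (hk : 1 < k) : LocalMaxAt (-a) n k ↔ LocalMinAt a n k := by
  simp [LocalMaxAt, LocalMinAt, hk, hk.ne']

lemma localMinAt_neg_iff {k : ℕ} (hk : 1 < k) : LocalMinAt (-a) n k ↔ LocalMaxAt a n k := by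
  simp [LocalMaxAt, LocalMinAt, hk, hk.ne']

lemma mem_extrema_neg_iff {k : ℕ} (hk : 1 < k) : k ∈ extrema (-a) n ↔ k ∈ extrema a n := by
  simp only [extrema, mem_filter, localMaxAt_neg_iff hk, localMinAt_neg_iff hk, or_comm]

lemma mem_extremaList {x : ℕ} : x ∈ extremaList a n ↔ x ∈ extrema a n := mem_sort _

lemma sortedLT_extremaList : (extremaList a n).SortedLT := sortedLT_sort _

variable (hinj : Set.InjOn a (Set.Icc 1 n))
include hinj

lemma exists_localMaxAt_mem_Ioo {lo hi j : ℕ} (hj : j ∈ Icc 1 n) (hlo : lo < j) (hhi : j < hi)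
    (hlo' : lo = 0 ∨ a lo < a j) (hhi' : hi = n + 1 ∨ a hi < a j) :
    ∃ p ∈ Icc 1 n, lo < p ∧ p < hi ∧ LocalMaxAt a n p := by
  rw [mem_Icc] at hj
  obtain ⟨p, hp, hpmax⟩ := (Ioo lo hi ∩ Icc 1 n).exists_max_image a
    ⟨j, by simp only [mem_inter, mem_Ioo, mem_Icc]; omega⟩
  simp only [mem_inter, mem_Ioo, mem_Icc] at hp hpmax
  have hjp : a j ≤ a p := hpmax j ⟨⟨hlo, hhi⟩, hj⟩
  have hnear : ∀ q, lo < q → q < hi → 1 ≤ q → q ≤ n → q ≠ p → a q < a p := fun q h1 h2 h3 h4 hqp =>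
    (hpmax q ⟨⟨h1, h2⟩, h3, h4⟩).lt_of_ne fun h => hqp (hinj ⟨h3, h4⟩ ⟨hp.2.1, hp.2.2⟩ h)
  refine ⟨p, mem_Icc.2 hp.2, hp.1.1, hp.1.2, ?_, ?_⟩
  · rcases eq_or_ne p n with hpn | hpn
    · exact Or.inr hpn
    rcases (show p + 1 < hi ∨ p + 1 = hi by omega) with h | h
    · exact Or.inl (hnear _ (by omega) h (by omega) (by omega) (by omega))
    · exact Or.inl (h ▸ (hhi'.resolve_left (by omega)).trans_le hjp)
  · rcases eq_or_ne p 1 with hp1 | hp1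
    · exact Or.inr hp1
    rcases (show lo < p - 1 ∨ lo = p - 1 by omega) with h | h
    · exact Or.inl (hnear _ h (by omega) (by omega) (by omega) (by omega))
    · exact Or.inl (h ▸ (hlo'.resolve_left (by omega)).trans_le hjp)

lemma exists_localMinAt_mem_Ioo {lo hi j : ℕ} (hj : j ∈ Icc 1 n) (hlo : lo < j) (hhi : j < hi)
    (hlo1 : 1 ≤ lo) (hlo' : a j < a lo) (hhi' : hi = n + 1 ∨ a j < a hi) :
    ∃ p ∈ Icc 1 n, lo < p ∧ p < hi ∧ LocalMinAt a n p := by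
  obtain ⟨p, hp, hlop, hphi, hmax⟩ := exists_localMaxAt_mem_Ioo (a := -a)
    (neg_injective.comp_injOn hinj) hj hlo hhi (Or.inr (neg_lt_neg hlo'))
    (hhi'.imp_right neg_lt_neg)
  exact ⟨p, hp, hlop, hphi, (localMaxAt_neg_iff (by omega)).1 hmax⟩

lemma exists_localMaxAt_of_lt_succ {j : ℕ} (hj : 1 ≤ j) (hjn : j < n) (h : a j < a (j + 1)) :
    ∃ p, j < p ∧ p ≤ n ∧ LocalMaxAt a n p ∧ a j < a p ∧
      ∀ q, j < q → q < p → q ∉ extrema a n := by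
  have hturn : ∃ p, j < p ∧ (p = n ∨ a (p + 1) < a p) := ⟨n, hjn, Or.inl rfl⟩
  obtain ⟨hjp, hpturn⟩ := Nat.find_spec hturn
  set p := Nat.find hturn
  have hpn : p ≤ n := Nat.find_min' hturn ⟨hjn, Or.inl rfl⟩
  have hup : ∀ q, j ≤ q → q < p → a q < a (q + 1) := by
    intro q hjq hqp
    rcases hjq.eq_or_lt with rfl | hjq
    · exact h
    obtain ⟨-, hq⟩ := not_or.1 (not_and.1 (Nat.find_min hturn hqp) hjq)
    exact (not_lt.1 hq).lt_of_ne fun e => by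
      have := hinj ⟨by omega, by omega⟩ ⟨by omega, by omega⟩ e
      omega
  have hmono : StrictMonoOn a (Set.Icc j p) :=
    strictMonoOn_of_lt_add_one Set.ordConnected_Icc fun q _ hq hq' => hup q hq.1 (by
      simp only [Set.mem_Icc] at hq'; omega)
  refine ⟨p, hjp, hpn, ⟨hpturn.symm, Or.inl ?_⟩, hmono ⟨le_rfl, hjp.le⟩ ⟨hjp.le, le_rfl⟩ hjp, ?_⟩
  · simpa [Nat.sub_add_cancel (show 1 ≤ p by omega)] using hup (p - 1) (by omega) (by omega)
  · intro q hjq hqp hq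
    rcases (mem_filter.1 hq).2 with ⟨hmax, -⟩ | ⟨-, hmin, -⟩
    · exact lt_asymm (hup q hjq.le hqp) (hmax.resolve_right (by omega))
    · have := hup (q - 1) (by omega) (by omega)
      rw [Nat.sub_add_cancel (by omega)] at this
      exact lt_asymm hmin this

lemma exists_localMinAt_of_succ_lt {j : ℕ} (hj : 1 ≤ j) (hjn : j < n) (h : a (j + 1) < a j) :
    ∃ p, j < p ∧ p ≤ n ∧ LocalMinAt a n p ∧ a p < a j ∧
      ∀ q, j < q → q < p → q ∉ extrema a n := by
  obtain ⟨p, hjp, hpn, hmax, hlt, hgap⟩ := exists_localMaxAt_of_lt_succ (a := -a)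
    (neg_injective.comp_injOn hinj) hj hjn (neg_lt_neg h)
  refine ⟨p, hjp, hpn, (localMaxAt_neg_iff (by omega)).1 hmax, neg_lt_neg_iff.1 hlt,
    fun q hjq hqp => ?_⟩
  rw [← mem_extrema_neg_iff (by omega)]
  exact hgap q hjq hqp

lemma localMinAt_of_next_of_localMaxAt {e e' : ℕ} (he : e ∈ extrema a n) (hmax : LocalMaxAt a n e)
    (he' : e' ∈ extrema a n) (hee' : e < e') (hnext : ∀ x ∈ extrema a n, e < x → e' ≤ x) :
    LocalMinAt a n e' ∧ a e' < a e := by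
  have he1 := (mem_Icc.1 (mem_filter.1 he).1).1
  have he'n := (mem_Icc.1 (mem_filter.1 he').1).2
  obtain ⟨p, hep, hpn, hmin, hlt, hgap⟩ :=
    exists_localMinAt_of_succ_lt hinj he1 (by omega) (hmax.1.resolve_right (by omega))
  obtain rfl : e' = p := le_antisymm
    (hnext p (mem_filter.2 ⟨mem_Icc.2 ⟨by omega, hpn⟩, Or.inr hmin⟩) hep)
    (not_lt.1 fun h => hgap e' hee' h he')
  exact ⟨hmin, hlt⟩

lemma localMaxAt_of_next_of_localMinAt {e e' : ℕ} (he : e ∈ extrema a n) (hmin : LocalMinAt a n e)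
    (he' : e' ∈ extrema a n) (hee' : e < e') (hnext : ∀ x ∈ extrema a n, e < x → e' ≤ x) :
    LocalMaxAt a n e' ∧ a e < a e' := by
  have he1 := (mem_Icc.1 (mem_filter.1 he).1).1
  have he'n := (mem_Icc.1 (mem_filter.1 he').1).2
  obtain ⟨p, hep, hpn, hmax, hlt, hgap⟩ :=
    exists_localMaxAt_of_lt_succ hinj he1 (by omega) (hmin.1.resolve_right (by omega))
  obtain rfl : e' = p := le_antisymm
    (hnext p (mem_filter.2 ⟨mem_Icc.2 ⟨by omega, hpn⟩, Or.inl hmax⟩) hep)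
    (not_lt.1 fun h => hgap e' hee' h he')
  exact ⟨hmax, hlt⟩

lemma localMaxAt_of_forall_le {e : ℕ} (he : e ∈ extrema a n)
    (hfirst : ∀ x ∈ extrema a n, e ≤ x) : LocalMaxAt a n e := by
  have he1 := mem_Icc.1 (mem_filter.1 he).1
  by_cases h1 : LocalMaxAt a n 1
  · obtain rfl : e = 1 :=
      le_antisymm (hfirst 1 (mem_filter.2 ⟨mem_Icc.2 ⟨le_rfl, by omega⟩, Or.inl h1⟩)) he1.1
    exact h1
  have h1n : 1 < n := by
    by_contra h
    exact h1 ⟨Or.inr (by omega), Or.inr rfl⟩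
  have h12 : a 1 < a 2 := by
    refine (not_lt.1 fun h => h1 ⟨Or.inl h, Or.inr rfl⟩).lt_of_ne fun h => ?_
    have := hinj ⟨le_rfl, by omega⟩ ⟨by omega, by omega⟩ h
    omega
  obtain ⟨p, h1p, hpn, hmax, -, hgap⟩ := exists_localMaxAt_of_lt_succ hinj le_rfl h1n h12
  have he_ne_one : e ≠ 1 := by
    rintro rfl
    rcases (mem_filter.1 he).2 with h | h
    · exact h1 h
    · exact absurd h.2.2 (lt_irrefl 1)
  obtain rfl : e = p := le_antisymm
    (hfirst p (mem_filter.2 ⟨mem_Icc.2 ⟨by omega, hpn⟩, Or.inl hmax⟩))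
    (not_lt.1 fun h => hgap e (by omega) h he)
  exact hmax

lemma extremaList_getElem_succ {i : ℕ} (hi : i + 1 < (extremaList a n).length) :
    (LocalMaxAt a n (extremaList a n)[i] → LocalMinAt a n (extremaList a n)[i + 1] ∧
      a (extremaList a n)[i + 1] < a (extremaList a n)[i]) ∧
    (LocalMinAt a n (extremaList a n)[i] → LocalMaxAt a n (extremaList a n)[i + 1] ∧
      a (extremaList a n)[i] < a (extremaList a n)[i + 1]) := by
  have he := mem_extremaList.1 (List.getElem_mem (by omega : i < (extremaList a n).length))
  have he' := mem_extremaList.1 (List.getElem_mem hi)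
  have hlt : (extremaList a n)[i] < (extremaList a n)[i + 1] :=
    sortedLT_extremaList.getElem_lt_getElem_iff.2 (lt_add_one i)
  have hnext : ∀ x ∈ extrema a n, (extremaList a n)[i] < x → (extremaList a n)[i + 1] ≤ x :=
    fun x hx => sortedLT_extremaList.getElem_succ_le_of_lt hi (mem_extremaList.2 hx)
  exact ⟨fun hmax => localMinAt_of_next_of_localMaxAt hinj he hmax he' hlt hnext,
    fun hmin => localMaxAt_of_next_of_localMinAt hinj he hmin he' hlt hnext⟩

lemma extremaList_getElem_parity (i : ℕ) (hi : i < (extremaList a n).length) :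
    if i % 2 = 0 then LocalMaxAt a n (extremaList a n)[i]
    else LocalMinAt a n (extremaList a n)[i] := by
  induction i with
  | zero =>
    refine localMaxAt_of_forall_le hinj (mem_extremaList.1 (List.getElem_mem hi)) fun x hx => ?_
    obtain ⟨k, hk, rfl⟩ := List.getElem_of_mem (mem_extremaList.2 hx)
    exact sortedLT_extremaList.getElem_le_getElem_iff.2 (Nat.zero_le k)
  | succ i ih =>
    have hstep := extremaList_getElem_succ hinj hi
    have hprev := ih (by omega)
    by_cases hpar : i % 2 = 0
    · rw [if_pos hpar] at hprev
      rw [if_neg (by omega)]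
      exact (hstep.1 hprev).1
    · rw [if_neg hpar] at hprev
      rw [if_pos (by omega)]
      exact (hstep.2 hprev).1

lemma isAltList_extremaList : IsAltList ((extremaList a n).map a) := by
  intro i hi
  simp only [List.length_map, List.getElem_map] at hi ⊢
  have hstep := extremaList_getElem_succ hinj hi
  have hkind := extremaList_getElem_parity hinj i (by omega)
  split_ifs at hkind ⊢
  · exact (hstep.1 hkind).2
  · exact (hstep.2 hkind).2

/-- The window of the `k`-th entry of `l` runs between its neighbours in `l`, with `0` and `n + 1`
standing in for the missing neighbours of the first and last entries. -/
lemma exists_extremum_between_neighbours {l : List ℕ} (hl : l.SortedLT)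
    (hmem : ∀ i ∈ l, i ∈ Icc 1 n) (halt : IsAltList (l.map a)) {k : ℕ} (hk : k < l.length) :
    ∃ p ∈ extrema a n, (0 :: l).getD k 0 < p ∧ p < l.getD (k + 1) (n + 1) ∧
      (LocalMaxAt a n p ↔ k % 2 = 0) := by
  have hstep : ∀ i (hi : i + 1 < l.length),
      if i % 2 = 0 then a l[i + 1] < a l[i] else a l[i] < a l[i + 1] := fun i hi => by
    have h := halt i (by simpa using hi)
    simp only [List.getElem_map] at h
    exact h
  have hj := hmem _ (List.getElem_mem hk)
  have hlo : (0 :: l).getD k 0 < l[k] ∧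
      (k % 2 = 0 → (0 :: l).getD k 0 = 0 ∨ a ((0 :: l).getD k 0) < a l[k]) ∧
      (k % 2 = 1 → 1 ≤ (0 :: l).getD k 0 ∧ a l[k] < a ((0 :: l).getD k 0)) := by
    rcases k with _ | k
    · rw [List.getD_cons_zero]
      exact ⟨(mem_Icc.1 hj).1, fun _ => Or.inl rfl, fun h => absurd h (by omega)⟩
    · have hk' := hstep k hk
      rw [List.getD_cons_succ, List.getD_eq_getElem _ _ (by omega)]
      refine ⟨hl.getElem_lt_getElem_iff.2 (lt_add_one k), fun hpar => Or.inr ?_,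
        fun hpar => ⟨(mem_Icc.1 (hmem _ (List.getElem_mem _))).1, ?_⟩⟩
      · rwa [if_neg (by omega)] at hk'
      · rwa [if_pos (by omega)] at hk'
  have hhi : l[k] < l.getD (k + 1) (n + 1) ∧
      (k % 2 = 0 → l.getD (k + 1) (n + 1) = n + 1 ∨ a (l.getD (k + 1) (n + 1)) < a l[k]) ∧
      (k % 2 = 1 → l.getD (k + 1) (n + 1) = n + 1 ∨ a l[k] < a (l.getD (k + 1) (n + 1))) := by
    rcases lt_or_ge (k + 1) l.length with h | h
    · have hk' := hstep k h
      rw [List.getD_eq_getElem _ _ h]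
      refine ⟨hl.getElem_lt_getElem_iff.2 (lt_add_one k), fun hpar => Or.inr ?_,
        fun hpar => Or.inr ?_⟩
      · rwa [if_pos hpar] at hk'
      · rwa [if_neg (by omega)] at hk'
    · rw [List.getD_eq_default _ _ h]
      exact ⟨by have := (mem_Icc.1 hj).2; omega, fun _ => Or.inl rfl, fun _ => Or.inl rfl⟩
  rcases Nat.mod_two_eq_zero_or_one k with hpar | hpar
  · obtain ⟨p, hp, hlop, hphi, hmax⟩ := exists_localMaxAt_mem_Ioo hinj hj hlo.1 hhi.1
      (hlo.2.1 hpar) (hhi.2.1 hpar)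
    exact ⟨p, mem_filter.2 ⟨hp, Or.inl hmax⟩, hlop, hphi, iff_of_true hmax hpar⟩
  · obtain ⟨p, hp, hlop, hphi, hmin⟩ := exists_localMinAt_mem_Ioo hinj hj hlo.1 hhi.1
      (hlo.2.2 hpar).1 (hlo.2.2 hpar).2 (hhi.2.2 hpar)
    exact ⟨p, mem_filter.2 ⟨hp, Or.inr hmin⟩, hlop, hphi,
      iff_of_false (not_localMaxAt_of_localMinAt hmin) (by omega)⟩

lemma length_le_card_extrema {l : List ℕ} (hl : l.SortedLT) (hmem : ∀ i ∈ l, i ∈ Icc 1 n)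
    (halt : IsAltList (l.map a)) : l.length ≤ (extrema a n).card := by
  choose! p hp using fun k (hk : k ∈ range l.length) =>
    exists_extremum_between_neighbours hinj hl hmem halt (mem_range.1 hk)
  have hne : ∀ k ∈ range l.length, ∀ k' ∈ range l.length, k < k' → p k ≠ p k' := by
    intro k hk k' hk' hkk' heq
    obtain ⟨-, -, hkhi, hkmax⟩ := hp k hk
    obtain ⟨-, hk'lo, -, hk'max⟩ := hp k' hk'
    rw [mem_range] at hk hk'
    obtain ⟨k', rfl⟩ : ∃ k'', k' = k'' + 1 := ⟨k' - 1, by omega⟩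
    rcases (show k' = k ∨ k + 1 ≤ k' by omega) with rfl | hkk'
    · rw [heq] at hkmax
      have := hkmax.symm.trans hk'max
      omega
    · rw [List.getD_eq_getElem _ _ (by omega)] at hkhi
      rw [List.getD_cons_succ, List.getD_eq_getElem _ _ (by omega)] at hk'lo
      have : l[k + 1] ≤ l[k'] := hl.getElem_le_getElem_iff.2 hkk'
      omega
  calc l.length = (range l.length).card := (card_range _).symm
    _ ≤ (extrema a n).card := card_le_card_of_injOn p (fun k hk => (hp k hk).1)
      fun k hk k' hk' heq => (lt_trichotomy k k').elim (fun h => absurd heq (hne k hk k' hk' h))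
        fun h => h.elim id fun h => absurd heq.symm (hne k' hk' k hk h)

end

theorem stmt3_general (n : ℕ) (a : ℕ → ℝ)
    (hdist : ∀ i ∈ Finset.Icc 1 n, ∀ j ∈ Finset.Icc 1 n, a i = a j → i = j) :
    LAon a (Finset.Icc 1 n)
      = ((Finset.Icc 1 n).filter (LocalMaxAt a n)).card
        + ((Finset.Icc 1 n).filter (LocalMinAt a n)).card := by
  have hinj : Set.InjOn a (Set.Icc 1 n) := fun i hi j hj h =>
    hdist i (mem_Icc.2 hi) j (mem_Icc.2 hj) h
  rw [← card_extrema]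
  refine IsGreatest.csSup_eq ⟨⟨extremaList a n, length_sort _, sortedLT_extremaList.isChain,
    fun i hi => (mem_filter.1 (mem_extremaList.1 hi)).1, isAltList_extremaList hinj⟩, ?_⟩
  rintro m ⟨l, rfl, hl, hmem, halt⟩
  exact length_le_card_extrema hinj hl.sortedLT hmem halt

/-- for a sequence `(a 1, …, a n) ∈ [0,1]ⁿ` with pairwise distinct
entries, `LAₙ(a)` equals the number of local maxima plus the number of
local minima of `a`. -/
theorem stmt3 (n : ℕ) (a : ℕ → ℝ)
    (hrange : ∀ i ∈ Finset.Icc 1 n, a i ∈ Set.Icc (0 : ℝ) 1)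
    (hdist : ∀ i ∈ Finset.Icc 1 n, ∀ j ∈ Finset.Icc 1 n, a i = a j → i = j) :
    LAon a (Finset.Icc 1 n)
      = ((Finset.Icc 1 n).filter (LocalMaxAt a n)).card
        + ((Finset.Icc 1 n).filter (LocalMinAt a n)).card :=
  stmt3_general n a hdist

end
end

section
/- Let a₁, a₂, … be i.i.d. random variables uniformly distributed on [0,1], and let LAₙ be the length of the longest alternating subsequence of (a₁,…,aₙ). Then LAₙ/n converges almost surely to 2/3 as n → ∞. -/
/-
Call `i` a turn of `b` if `b (i + 1)` is a peak or a valley of `b i, b (i + 1), b (i + 2)`.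
Between two consecutive turns `b` is monotone, so the points just after the turns form an
alternating subsequence; conversely, between consecutive terms of an alternating subsequence
there is a step in the prescribed direction, and between two steps in opposite directions
there is a turn. Hence, for distinct values, `LAₙ` is the number of turns up to an error of 3.
The turn indicators of i.i.d. uniform variables are identically distributed and independent
at distance at least 3, so the strong law of large numbers along each residue class mod 3 shows
that the frequency of turns is almost surely `P(turn) = ∫₀¹ ((1 - y)² + y²) dy = 2/3`.
-/

open MeasureTheory ProbabilityTheory Filter Finset

noncomputable section

open Topology

theorem Nat.exists_le_lt_and_not_succ {P : ℕ → Prop} {p q : ℕ} (hpq : p ≤ q) (hp : P p)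
    (hq : ¬ P q) : ∃ k, p ≤ k ∧ k < q ∧ P k ∧ ¬ P (k + 1) := by
  by_contra! h
  have : ∀ k, p ≤ k → k ≤ q → P k := by
    intro k hk
    induction k, hk using Nat.le_induction with
    | base => exact fun _ => hp
    | succ k hpk ih => exact fun hkq => h k hpk (by omega) (ih (by omega))
  exact hq (this q hpq le_rfl)

section Alternating

variable {α : Type*} [LinearOrder α] {b : ℕ → α}

theorem exists_descent_of_lt {p q : ℕ} (hpq : p ≤ q) (h : b q < b p) :
    ∃ k, p ≤ k ∧ k < q ∧ b (k + 1) < b k := by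
  obtain ⟨k, hpk, hkq, hk, hk1⟩ :=
    Nat.exists_le_lt_and_not_succ (P := fun k => b p ≤ b k) hpq le_rfl h.not_ge
  exact ⟨k, hpk, hkq, (not_le.1 hk1).trans_le hk⟩

theorem exists_not_descent_of_lt {p q : ℕ} (hpq : p ≤ q) (h : b p < b q) :
    ∃ k, p ≤ k ∧ k < q ∧ ¬ b (k + 1) < b k := by
  obtain ⟨k, hpk, hkq, hk, hk1⟩ :=
    Nat.exists_le_lt_and_not_succ (P := fun k => b k ≤ b p) hpq le_rfl h.not_ge
  exact ⟨k, hpk, hkq, fun h' => hk1 (h'.le.trans hk)⟩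

/-- `y` is a peak or a valley of `x, y, z`; a tie counts as an ascent. -/
def IsTurn (x y z : α) : Prop := ¬ (y < x ↔ z < y)

instance (x y z : α) : Decidable (IsTurn x y z) := inferInstanceAs (Decidable ¬ _)

def turns (b : ℕ → α) (n : ℕ) : Finset ℕ :=
  {i ∈ range n | IsTurn (b i) (b (i + 1)) (b (i + 2))}

theorem exists_isTurn_of_descent_ne {p q : ℕ} (hpq : p ≤ q)
    (h : ¬ (b (p + 1) < b p ↔ b (q + 1) < b q)) :
    ∃ c, p ≤ c ∧ c < q ∧ IsTurn (b c) (b (c + 1)) (b (c + 2)) := by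
  obtain ⟨c, hpc, hcq, hc, hc1⟩ := Nat.exists_le_lt_and_not_succ
    (P := fun k => b (k + 1) < b k ↔ b (p + 1) < b p) hpq Iff.rfl fun h' => h h'.symm
  exact ⟨c, hpc, hcq, fun h' => hc1 (h'.symm.trans hc)⟩

variable {c c' : ℕ}

theorem descent_iff_of_forall_not_isTurn (hcc : c < c')
    (hgap : ∀ x, c < x → x < c' → ¬ IsTurn (b x) (b (x + 1)) (b (x + 2))) :
    b (c' + 1) < b c' ↔ b (c + 2) < b (c + 1) := by
  by_contra hne
  obtain ⟨x, hx, hx', hturn⟩ := exists_isTurn_of_descent_ne (b := b) (p := c + 1) (q := c')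
    (by omega) fun h => hne h.symm
  exact hgap x (by omega) hx' hturn

theorem descent_iff_not_of_forall_not_isTurn (hcc : c < c')
    (hgap : ∀ x, c < x → x < c' → ¬ IsTurn (b x) (b (x + 1)) (b (x + 2)))
    (hturn : IsTurn (b c') (b (c' + 1)) (b (c' + 2))) :
    b (c' + 2) < b (c' + 1) ↔ ¬ b (c + 2) < b (c + 1) := by
  have := descent_iff_of_forall_not_isTurn hcc hgap
  unfold IsTurn at hturn
  tauto

theorem lt_iff_descent_of_forall_not_isTurn (hb : Function.Injective b) (hcc : c < c')
    (hgap : ∀ x, c < x → x < c' → ¬ IsTurn (b x) (b (x + 1)) (b (x + 2))) :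
    b (c' + 1) < b (c + 1) ↔ b (c + 2) < b (c + 1) := by
  have hrun : ∀ x, c < x → x ≤ c' → (b (x + 1) < b x ↔ b (c + 2) < b (c + 1)) :=
    fun x hx hxc' => descent_iff_of_forall_not_isTurn hx fun y hy hyx => hgap y hy (by omega)
  constructor
  · intro hlt
    obtain ⟨k, hk, hk', hdesc⟩ := exists_descent_of_lt (by omega : c + 1 ≤ c' + 1) hlt
    exact (hrun k (by omega) (by omega)).1 hdesc
  · intro hD
    refine (lt_or_gt_of_ne (hb.ne (by omega : c' + 1 ≠ c + 1))).resolve_right fun hgt => ?_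
    obtain ⟨k, hk, hk', hasc⟩ := exists_not_descent_of_lt (by omega : c + 1 ≤ c' + 1) hgt
    exact hasc ((hrun k (by omega) (by omega)).2 hD)

def IsAltSubseq (a : ℕ → α) (s : Finset ℕ) (m : ℕ) (e : ℕ → ℕ) : Prop :=
  (∀ i < m, e i ∈ s) ∧ ∀ i, i + 1 < m → e i < e (i + 1) ∧
    if i % 2 = 0 then a (e (i + 1)) < a (e i) else a (e i) < a (e (i + 1))

theorem isAltSubseq_getD {a : ℕ → α} {s : Finset ℕ} {l : List ℕ} (hl : l.IsChain (· < ·))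
    (hs : ∀ i ∈ l, i ∈ s) (halt : IsAltList (l.map a)) :
    IsAltSubseq a s l.length (fun j => l.getD j 0) := by
  refine ⟨fun i hi => ?_, fun i hi => ?_⟩
  · dsimp only
    rw [List.getD_eq_getElem _ _ hi]
    exact hs _ (l.getElem_mem hi)
  · dsimp only
    rw [List.getD_eq_getElem _ _ hi, List.getD_eq_getElem _ _ (by omega)]
    have halt_i := halt i (by simpa using hi)
    rw [List.getElem_map, List.getElem_map] at halt_i
    exact ⟨List.isChain_iff_getElem.1 hl i hi, halt_i⟩

theorem le_LAon {a : ℕ → α} {s : Finset ℕ} {m : ℕ} {e : ℕ → ℕ} (he : IsAltSubseq a s m e) :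
    m ≤ LAon a s := by
  refine le_csSup ⟨#s, ?_⟩ ⟨(List.range m).map e, by simp, ?_, ?_, fun i hi => ?_⟩
  · rintro _ ⟨l, rfl, hl, hs, -⟩
    rw [← List.toFinset_card_of_nodup ((List.IsChain.pairwise hl).imp ne_of_lt)]
    exact card_le_card fun i hi => hs i (List.mem_toFinset.1 hi)
  · exact List.isChain_iff_getElem.2 fun i hi => by simpa using (he.2 i (by simpa using hi)).1
  · simpa using he.1
  · simpa using (he.2 i (by simpa using hi)).2

theorem LAon_le {a : ℕ → α} {s : Finset ℕ} {N : ℕ}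
    (h : ∀ m e, IsAltSubseq a s m e → m ≤ N) : LAon a s ≤ N :=
  csSup_le ⟨0, [], rfl, List.isChain_nil, by simp, fun i h => absurd h (by simp)⟩
    fun _ ⟨_, hlen, hl, hs, halt⟩ => hlen ▸ h _ _ (isAltSubseq_getD hl hs halt)


theorem LAon_Icc_le_card_turns_add_two (b : ℕ → α) (n : ℕ) :
    LAon b (Icc 1 n) ≤ #(turns b (n - 1)) + 2 := by
  apply LAon_le
  rintro m e ⟨hmem, hstep⟩
  have hslope : ∀ j, ∃ k, j + 1 < m →
      e j ≤ k ∧ k < e (j + 1) ∧ (b (k + 1) < b k ↔ j % 2 = 0) := by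
    intro j
    by_cases hj : j + 1 < m
    · obtain ⟨hlt, halt⟩ := hstep j hj
      split_ifs at halt with hpar
      · obtain ⟨k, h1, h2, h3⟩ := exists_descent_of_lt hlt.le halt
        exact ⟨k, fun _ => ⟨h1, h2, iff_of_true h3 hpar⟩⟩
      · obtain ⟨k, h1, h2, h3⟩ := exists_not_descent_of_lt hlt.le halt
        exact ⟨k, fun _ => ⟨h1, h2, iff_of_false h3 hpar⟩⟩
    · exact ⟨0, fun h => absurd h hj⟩
  choose k hk using hslope
  have hturn : ∀ j, ∃ c, j + 2 < m →
      k j ≤ c ∧ c < k (j + 1) ∧ IsTurn (b c) (b (c + 1)) (b (c + 2)) := by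
    intro j
    by_cases hj : j + 2 < m
    · obtain ⟨-, hkj, hDj⟩ := hk j (by omega)
      obtain ⟨hkj', -, hDj'⟩ := hk (j + 1) hj
      obtain ⟨c, h1, h2, h3⟩ := exists_isTurn_of_descent_ne (by omega : k j ≤ k (j + 1))
        (by rw [hDj, hDj']; omega)
      exact ⟨c, fun _ => ⟨h1, h2, h3⟩⟩
    · exact ⟨0, fun h => absurd h hj⟩
  choose c hc using hturn
  have hmaps : Set.MapsTo c (range (m - 2)) (turns b (n - 1)) := by
    intro j hj
    have hj : j + 2 < m := by rw [coe_range, Set.mem_Iio] at hj; omega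
    have he := mem_Icc.1 (hmem (j + 1 + 1) hj)
    obtain ⟨-, hcj, hturn⟩ := hc j hj
    have := (hk (j + 1) (by omega)).2.1
    exact mem_filter.2 ⟨mem_range.2 (by omega), hturn⟩
  have hinj : Set.InjOn c (range (m - 2)) := by
    rw [coe_range]
    refine (strictMonoOn_of_lt_add_one Set.ordConnected_Iio fun j _ _ hj1 => ?_).injOn
    have hj1 : j + 1 + 2 < m := by rw [Set.mem_Iio] at hj1; omega
    exact (hc j (by omega)).2.1.trans_le (hc (j + 1) hj1).1
  have := card_le_card_of_injOn c hmaps hinj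
  simp only [card_range] at this
  omega

theorem isAltSubseq_of_turns (hb : Function.Injective b) {s : Finset ℕ} {C : ℕ} {c : ℕ → ℕ}
    (hs : ∀ t < C, c t + 1 ∈ s) (hturn : ∀ t < C, IsTurn (b (c t)) (b (c t + 1)) (b (c t + 2)))
    (hmono : ∀ t, t + 1 < C → c t < c (t + 1))
    (hgap : ∀ t x, t + 1 < C → c t < x → x < c (t + 1) → ¬ IsTurn (b x) (b (x + 1)) (b (x + 2)))
    (hfirst : 0 < C → b (c 0 + 2) < b (c 0 + 1)) :
    IsAltSubseq b s C (fun t => c t + 1) := by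
  have hpar : ∀ t < C, (b (c t + 2) < b (c t + 1) ↔ t % 2 = 0) := by
    intro t ht
    induction t with
    | zero => exact iff_of_true (hfirst ht) rfl
    | succ t ih =>
      rw [descent_iff_not_of_forall_not_isTurn (hmono t ht) (hgap t · ht) (hturn (t + 1) ht),
        ih (by omega)]
      omega
  refine ⟨hs, fun t ht => ?_⟩
  dsimp only
  refine ⟨by simpa using hmono t ht, ?_⟩
  have hstep := lt_iff_descent_of_forall_not_isTurn hb (hmono t ht) (hgap t · ht)
  split_ifs with ht2
  · exact hstep.2 ((hpar t (by omega)).2 ht2)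
  · refine ((lt_or_gt_of_ne (hb.ne ?_)).resolve_right fun h => ?_)
    · have := hmono t ht
      omega
    · exact ht2 ((hpar t (by omega)).1 (hstep.1 h))

theorem card_turns_le_LAon_Icc_add_one (hb : Function.Injective b) (n : ℕ) :
    #(turns b (n - 1)) ≤ LAon b (Icc 1 n) + 1 := by
  set T := turns b (n - 1)
  have hfin : (Set.ofPred (· ∈ T)).Finite := T.finite_toSet
  have hcard : #hfin.toFinset = #T := by simp
  set c := Nat.nth (· ∈ T)
  have hmem : ∀ t < #T, c t ∈ T := fun t ht => Nat.nth_mem_of_lt_card hfin (hcard ▸ ht)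
  have hlt (t) (ht : t + 1 < #T) : c t < c (t + 1) :=
    Nat.nth_lt_nth' (by omega) fun hf => by simpa using ht
  have hgap (t x) (ht : t + 1 < #T) (hx : c t < x) (hx' : x < c (t + 1)) :
      ¬ IsTurn (b x) (b (x + 1)) (b (x + 2)) := by
    intro hturn
    have hxT : x ∈ T := mem_filter.2
      ⟨mem_range.2 (hx'.trans (mem_range.1 (mem_filter.1 (hmem (t + 1) ht)).1)), hturn⟩
    exact (Nat.le_nth_of_lt_nth_succ hx' hxT).not_gt hx
  have hseq (off) (hfirst : off < #T → b (c off + 2) < b (c off + 1)) :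
      #T - off ≤ LAon b (Icc 1 n) := by
    refine le_LAon (isAltSubseq_of_turns hb (c := fun t => c (t + off)) (fun t ht => ?_)
      (fun t ht => (mem_filter.1 (hmem (t + off) (by omega))).2) (fun t ht => ?_)
      (fun t x ht => ?_) (fun h => by simpa using hfirst (by omega)))
    · have := mem_range.1 (mem_filter.1 (hmem (t + off) (by omega))).1
      exact mem_Icc.2 ⟨by omega, by omega⟩
    · simpa only [add_right_comm t 1 off] using hlt (t + off) (by omega)
    · simpa only [add_right_comm t 1 off] using hgap (t + off) x (by omega)
  -- If the step after the first turn is an ascent, start from the second turn.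
  by_cases hfirst : 0 < #T → b (c 0 + 2) < b (c 0 + 1)
  · have := hseq 0 hfirst
    omega
  · push Not at hfirst
    have := hseq 1 fun h1 => (descent_iff_not_of_forall_not_isTurn (hlt 0 h1) (hgap 0 · h1)
      (mem_filter.1 (hmem 1 h1)).2).2 hfirst.2.not_gt
    omega

theorem card_turns_succ_le (b : ℕ → α) (n : ℕ) :
    #(turns b (n + 1)) ≤ #(turns b n) + 1 := by
  rw [turns, range_add_one, filter_insert]
  split_ifs
  · exact card_insert_le _ _
  · exact Nat.le_succ _

theorem card_turns_mono (b : ℕ → α) : Monotone fun n => #(turns b n) :=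
  fun _ _ h => card_le_card (filter_subset_filter _ (range_subset_range.2 h))

theorem abs_LAon_Icc_sub_card_turns_le (hb : Function.Injective b) {n : ℕ} (hn : 1 ≤ n) :
    |(LAon b (Icc 1 n) : ℝ) - #(turns b n)| ≤ 3 := by
  have hup := LAon_Icc_le_card_turns_add_two b n
  have hlow := card_turns_le_LAon_Icc_add_one hb n
  have hsucc := card_turns_succ_le b (n - 1)
  have hmono : #(turns b (n - 1)) ≤ #(turns b n) := card_turns_mono b (Nat.sub_le n 1)
  rw [Nat.sub_add_cancel hn] at hsucc
  have h1 : (LAon b (Icc 1 n) : ℝ) ≤ #(turns b n) + 3 := by exact_mod_cast (by omega)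
  have h2 : (#(turns b n) : ℝ) ≤ LAon b (Icc 1 n) + 3 := by exact_mod_cast (by omega)
  rw [abs_sub_le_iff]
  constructor <;> linarith

end Alternating

theorem Filter.Tendsto.div_natCast_of_abs_sub_le {u v : ℕ → ℝ} {c C : ℝ}
    (hv : Tendsto (fun n => v n / n) atTop (𝓝 c)) (h : ∀ᶠ n in atTop, |u n - v n| ≤ C) :
    Tendsto (fun n => u n / n) atTop (𝓝 c) := by
  have hdiff : Tendsto (fun n => (u n - v n) / n) atTop (𝓝 0) := by
    refine squeeze_zero_norm' (h.mono fun n hn => ?_) (tendsto_const_div_atTop_nhds_zero_nat C)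
    rw [norm_div, Real.norm_eq_abs, RCLike.norm_natCast]
    exact div_le_div_of_nonneg_right hn n.cast_nonneg
  simpa [← add_div] using hv.add hdiff

theorem Finset.sum_range_mul_eq_sum_residues {M : Type*} [AddCommMonoid M] (x : ℕ → M)
    (p K : ℕ) :
    ∑ i ∈ range (p * K), x i = ∑ r ∈ range p, ∑ j ∈ range K, x (p * j + r) := by
  induction K with
  | zero => simp
  | succ K ih =>
    rw [mul_add_one, sum_range_add, ih, ← sum_add_distrib]
    simp only [sum_range_succ]

theorem tendsto_sum_range_div_of_residues {x : ℕ → ℝ} {p : ℕ} {B c : ℝ} (hp : 0 < p)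
    (hx : ∀ i, |x i| ≤ B)
    (h : ∀ r < p, Tendsto (fun K : ℕ => (∑ j ∈ range K, x (p * j + r)) / K) atTop (𝓝 c)) :
    Tendsto (fun n : ℕ => (∑ i ∈ range n, x i) / n) atTop (𝓝 c) := by
  have hratio : Tendsto (fun n : ℕ => ((n / p : ℕ) : ℝ) / n) atTop (𝓝 (1 / p)) := by
    refine Tendsto.div_natCast_of_abs_sub_le (v := fun n => n / p) (C := 1) ?_ ?_
    · refine tendsto_const_nhds.congr' ((eventually_ne_atTop 0).mono fun n hn => ?_)
      field_simp
    · refine Eventually.of_forall fun n => ?_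
      rw [← Nat.floor_div_eq_div (K := ℝ), abs_le]
      have := Nat.floor_le (by positivity : (0 : ℝ) ≤ n / p)
      have := Nat.lt_floor_add_one ((n : ℝ) / p)
      constructor <;> linarith
  have hres : ∀ r ∈ range p, Tendsto (fun n : ℕ => (∑ j ∈ range (n / p), x (p * j + r)) / n)
      atTop (𝓝 (c / p)) := by
    intro r hr
    have := ((h r (mem_range.1 hr)).comp (Nat.tendsto_div_const_atTop hp.ne')).mul hratio
    rw [mul_one_div] at this
    refine this.congr' ((eventually_ge_atTop p).mono fun n hn => ?_)
    have : ((n / p : ℕ) : ℝ) ≠ 0 := by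
      have := Nat.div_pos hn hp
      positivity
    simp only [Function.comp_apply]
    field_simp
  have hblocks := tendsto_finsetSum _ hres
  simp only [← sum_div, ← sum_range_mul_eq_sum_residues, sum_const, card_range,
    nsmul_eq_mul] at hblocks
  rw [mul_div_cancel_left₀ c (by positivity)] at hblocks
  refine hblocks.div_natCast_of_abs_sub_le (C := p * B) (Eventually.of_forall fun n => ?_)
  have hsplit : ∑ i ∈ range n, x i
      = ∑ i ∈ range (p * (n / p)), x i + ∑ i ∈ range (n % p), x (p * (n / p) + i) := by
    rw [← sum_range_add, Nat.div_add_mod]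
  rw [hsplit, add_sub_cancel_left]
  calc |∑ i ∈ range (n % p), x (p * (n / p) + i)|
      ≤ ∑ i ∈ range (n % p), |x (p * (n / p) + i)| := abs_sum_le_sum_abs _ _
    _ ≤ ((n % p : ℕ) : ℝ) * B := by
        simpa using sum_le_card_nsmul (range (n % p)) _ B fun i _ => hx (p * (n / p) + i)
    _ ≤ p * B := by
        gcongr
        · exact (abs_nonneg _).trans (hx 0)
        · exact_mod_cast (Nat.mod_lt n hp).le

theorem volume_restrict_unitInterval_Iic {y : ℝ} (hy : y ∈ Set.Icc (0 : ℝ) 1) :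
    volume.restrict (Set.Icc (0 : ℝ) 1) (Set.Iic y) = ENNReal.ofReal y := by
  rw [Measure.restrict_apply measurableSet_Iic, ← Set.Ici_inter_Iic, Set.inter_left_comm,
    Set.Iic_inter_Iic, min_eq_left hy.2, Set.Ici_inter_Iic, Real.volume_Icc, sub_zero]

theorem volume_restrict_unitInterval_Ici {y : ℝ} (hy : y ∈ Set.Icc (0 : ℝ) 1) :
    volume.restrict (Set.Icc (0 : ℝ) 1) (Set.Ici y) = ENNReal.ofReal (1 - y) := by
  rw [Measure.restrict_apply measurableSet_Ici, ← Set.Ici_inter_Iic, ← Set.inter_assoc,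
    Set.Ici_inter_Ici, max_eq_left hy.1, Set.Ici_inter_Iic, Real.volume_Icc]

theorem measurableSet_setOf_isTurn : MeasurableSet {p : ℝ × ℝ × ℝ | IsTurn p.2.1 p.1 p.2.2} :=
  ((measurableSet_lt (by fun_prop) (by fun_prop)).iff
    (measurableSet_lt (by fun_prop) (by fun_prop))).compl

/-- Conditioning on the middle point `y`, a turn is one of the rectangles `(y, 1] × [y, 1]` and
`[0, y] × [0, y)`, so its probability is `∫₀¹ ((1 - y)² + y²) dy`. -/
theorem volume_restrict_unitInterval_prod_setOf_isTurn :
    (volume.restrict (Set.Icc (0 : ℝ) 1)).prod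
      ((volume.restrict (Set.Icc (0 : ℝ) 1)).prod (volume.restrict (Set.Icc (0 : ℝ) 1)))
      {p : ℝ × ℝ × ℝ | IsTurn p.2.1 p.1 p.2.2} = ENNReal.ofReal (2 / 3) := by
  set U := volume.restrict (Set.Icc (0 : ℝ) 1)
  have hsection (y : ℝ) (hy : y ∈ Set.Icc (0 : ℝ) 1) :
      (U.prod U) (Prod.mk y ⁻¹' {p : ℝ × ℝ × ℝ | IsTurn p.2.1 p.1 p.2.2})
        = ENNReal.ofReal ((1 - y) ^ 2 + y ^ 2) := by
    have : Prod.mk y ⁻¹' {p : ℝ × ℝ × ℝ | IsTurn p.2.1 p.1 p.2.2}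
        = Set.Ioi y ×ˢ Set.Ici y ∪ Set.Iic y ×ˢ Set.Iio y := by
      ext ⟨x, z⟩
      simp only [IsTurn, Set.mem_preimage, Set.mem_ofPred_eq, Set.mem_union, Set.mem_prod,
        Set.mem_Ioi, Set.mem_Ici, Set.mem_Iic, Set.mem_Iio, ← not_lt]
      tauto
    rw [this, measure_union (Set.disjoint_prod.2 (.inl (Set.Iic_disjoint_Ioi le_rfl).symm))
        (measurableSet_Iic.prod measurableSet_Iio), Measure.prod_prod, Measure.prod_prod,
      measure_congr Ioi_ae_eq_Ici, measure_congr Iio_ae_eq_Iic,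
      volume_restrict_unitInterval_Ici hy, volume_restrict_unitInterval_Iic hy,
      ← ENNReal.ofReal_mul (by linarith [hy.2]), ← ENNReal.ofReal_mul hy.1,
      ← ENNReal.ofReal_add (mul_self_nonneg _) (mul_self_nonneg _)]
    ring_nf
  rw [Measure.prod_apply measurableSet_setOf_isTurn,
    setLIntegral_congr_fun measurableSet_Icc hsection, ← ofReal_integral_eq_lintegral_ofReal
      ((by fun_prop : Continuous fun y : ℝ => (1 - y) ^ 2 + y ^ 2).integrableOn_Icc)
      (ae_of_all _ fun y => by positivity),
    integral_Icc_eq_integral_Ioc, ← intervalIntegral.integral_of_le zero_le_one,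
    intervalIntegral.integral_add
      ((by fun_prop : Continuous fun y : ℝ => (1 - y) ^ 2).intervalIntegrable _ _)
      ((continuous_pow 2).intervalIntegrable _ _),
    intervalIntegral.integral_comp_sub_left (fun y => y ^ 2)]
  norm_num

section Probability

variable {Ω : Type*} [MeasurableSpace Ω] {P : Measure Ω}

theorem strong_law_ae_of_indepFun_of_add_le [IsFiniteMeasure P] {Y : ℕ → Ω → ℝ} {m : ℕ} {B : ℝ}
    (hm : 0 < m) (hident : ∀ k, IdentDistrib (Y k) (Y 0) P P)
    (hindep : ∀ k l, k + m ≤ l → IndepFun (Y k) (Y l) P) (hbdd : ∀ k ω, |Y k ω| ≤ B) :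
    ∀ᵐ ω ∂P, Tendsto (fun n : ℕ => (∑ k ∈ range n, Y k ω) / n) atTop (𝓝 P[Y 0]) := by
  have hint : Integrable (Y 0) P :=
    .of_bound (hident 0).aemeasurable_fst.aestronglyMeasurable B (ae_of_all _ (hbdd 0))
  have hres (r : ℕ) : ∀ᵐ ω ∂P,
      Tendsto (fun K : ℕ => (∑ j ∈ range K, Y (m * j + r) ω) / K) atTop (𝓝 P[Y 0]) := by
    have hpair : Pairwise fun j j' => IndepFun (Y (m * j + r)) (Y (m * j' + r)) P := by
      have (j j' : ℕ) (h : j < j') : m * j + r + m ≤ m * j' + r := by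
        have := Nat.mul_le_mul_left m (Nat.succ_le_of_lt h)
        rw [Nat.mul_succ] at this
        omega
      intro j j' hne
      rcases hne.lt_or_gt with h | h
      · exact hindep _ _ (this j j' h)
      · exact (hindep _ _ (this j' j h)).symm
    have := strong_law_ae_real (fun j => Y (m * j + r))
      (by simpa using (hident r).integrable_iff.2 hint) hpair
      fun j => (hident _).trans (by simpa using (hident r).symm)
    simpa only [mul_zero, zero_add, (hident r).integral_eq] using this
  filter_upwards [ae_all_iff.2 hres] with ω hω
  exact tendsto_sum_range_div_of_residues hm (hbdd · ω) fun r _ => hω r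

theorem ProbabilityTheory.iIndepFun.map_prodMk_prodMk_eq [IsFiniteMeasure P] {ι β : Type*}
    [MeasurableSpace β] {a : ι → Ω → β} (hmeas : ∀ i, Measurable (a i)) (hindep : iIndepFun a P)
    {i j l : ι} (hij : i ≠ j) (hil : i ≠ l) (hjl : j ≠ l) :
    P.map (fun ω => (a i ω, a j ω, a l ω))
      = (P.map (a i)).prod ((P.map (a j)).prod (P.map (a l))) := by
  have hi_jl := (hindep.indepFun_prodMk hmeas j l i hij.symm hil.symm).symm
  rw [(indepFun_iff_map_prod_eq_prod_map_map (hmeas i).aemeasurable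
      ((hmeas j).prodMk (hmeas l)).aemeasurable).1 hi_jl,
    (indepFun_iff_map_prod_eq_prod_map_map (hmeas j).aemeasurable (hmeas l).aemeasurable).1
      (hindep.indepFun hjl)]

theorem ProbabilityTheory.iIndepFun.indepFun_prodMk_prodMk₃ {ι β : Type*} [DecidableEq ι]
    [MeasurableSpace β] {a : ι → Ω → β} (hmeas : ∀ i, Measurable (a i)) (hindep : iIndepFun a P)
    {i j l i' j' l' : ι} (hdisj : Disjoint ({i, j, l} : Finset ι) {i', j', l'}) :
    IndepFun (fun ω => (a i ω, a j ω, a l ω)) (fun ω => (a i' ω, a j' ω, a l' ω)) P := by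
  have hproj {i j l : ι} : Measurable fun v : ({i, j, l} : Finset ι) → β =>
      (v ⟨i, by simp⟩, v ⟨j, by simp⟩, v ⟨l, by simp⟩) := by
    fun_prop
  exact (hindep.indepFun_finset _ _ hdisj hmeas).comp hproj hproj

theorem ae_injective_of_iIndepFun [IsFiniteMeasure P] {ι : Type*} [Countable ι] {a : ι → Ω → ℝ}
    (hmeas : ∀ i, Measurable (a i)) (hindep : iIndepFun a P)
    (hatom : ∀ i x, P.map (a i) {x} = 0) :
    ∀ᵐ ω ∂P, Function.Injective fun i => a i ω := by
  simp only [Function.Injective, ae_all_iff]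
  intro i j
  by_cases hij : i = j
  · exact ae_of_all _ fun _ _ => hij
  rw [ae_iff]
  simp only [hij, imp_false, not_not]
  have hdiag : (P.map (a i)).prod (P.map (a j)) (Set.diagonal ℝ) = 0 := by
    rw [Measure.prod_apply measurableSet_diagonal]
    simp [Set.preimage, Set.diagonal, hatom j]
  rw [← (indepFun_iff_map_prod_eq_prod_map_map (hmeas i).aemeasurable (hmeas j).aemeasurable).1
    (hindep.indepFun hij), Measure.map_apply ((hmeas i).prodMk (hmeas j)) measurableSet_diagonal]
    at hdiag
  exact hdiag

theorem ae_tendsto_card_turns_div [IsProbabilityMeasure P] {a : ℕ → Ω → ℝ}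
    (hmeas : ∀ i, Measurable (a i)) (hindep : iIndepFun a P)
    (hunif : ∀ i, P.map (a i) = volume.restrict (Set.Icc 0 1)) :
    ∀ᵐ ω ∂P, Tendsto (fun n : ℕ => (#(turns (fun i => a i ω) n) : ℝ) / n) atTop (𝓝 (2 / 3)) := by
  set S := {p : ℝ × ℝ × ℝ | IsTurn p.2.1 p.1 p.2.2}
  set W : ℕ → Ω → ℝ × ℝ × ℝ := fun k ω => (a (k + 1) ω, a k ω, a (k + 2) ω)
  have hW (k : ℕ) : Measurable (W k) := by fun_prop
  have hlaw (k : ℕ) : P.map (W k) = (volume.restrict (Set.Icc (0 : ℝ) 1)).prod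
      ((volume.restrict (Set.Icc (0 : ℝ) 1)).prod (volume.restrict (Set.Icc (0 : ℝ) 1))) := by
    rw [hindep.map_prodMk_prodMk_eq hmeas (by omega) (by omega) (by omega), hunif, hunif, hunif]
  have hind : Measurable (S.indicator (1 : ℝ × ℝ × ℝ → ℝ)) :=
    measurable_one.indicator measurableSet_setOf_isTurn
  set Y : ℕ → Ω → ℝ := fun k => S.indicator 1 ∘ W k
  have hident (k : ℕ) : IdentDistrib (Y k) (Y 0) P P :=
    IdentDistrib.comp ⟨(hW k).aemeasurable, (hW 0).aemeasurable, by rw [hlaw, hlaw]⟩ hind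
  have hindepY (k l : ℕ) (hkl : k + 3 ≤ l) : IndepFun (Y k) (Y l) P :=
    (hindep.indepFun_prodMk_prodMk₃ hmeas (by simp [Finset.disjoint_left]; omega)).comp hind hind
  have hmean : P[Y 0] = 2 / 3 := by
    simp only [Y, Function.comp_apply]
    rw [← integral_map (hW 0).aemeasurable hind.aestronglyMeasurable, hlaw,
      integral_indicator_one measurableSet_setOf_isTurn, measureReal_def,
      volume_restrict_unitInterval_prod_setOf_isTurn]
    norm_num
  have hbdd (k : ℕ) (ω : Ω) : |Y k ω| ≤ 1 := by
    simp only [Y, Function.comp_apply, Set.indicator_apply]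
    split_ifs <;> simp
  filter_upwards [strong_law_ae_of_indepFun_of_add_le (by norm_num) hident hindepY hbdd]
    with ω hω
  rw [hmean] at hω
  convert hω using 3 with n
  simp only [turns, natCast_card_filter, Y, W, S, Function.comp_apply, Set.indicator_apply,
    Set.mem_ofPred_eq, Pi.one_apply]

end Probability

/-- if `a₁, a₂, …` are i.i.d. uniform on `[0,1]` and `LAₙ` is the
length of the longest alternating subsequence of `(a₁,…,aₙ)`, then `LAₙ/n → 2/3`
almost surely. -/
theorem stmt8
    {Ω : Type*} [MeasurableSpace Ω] (P : Measure Ω) [IsProbabilityMeasure P]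
    (a : ℕ → Ω → ℝ)
    (hmeas : ∀ i, Measurable (a i))
    (hindep : iIndepFun a P)
    (hunif : ∀ i, Measure.map (a i) P = (volume : Measure ℝ).restrict (Set.Icc 0 1)) :
    ∀ᵐ ω ∂P,
      Tendsto (fun n : ℕ => (LAon (fun i => a i ω) (Finset.Icc 1 n) : ℝ) / n)
        atTop (nhds (2 / 3)) := by
  filter_upwards [ae_injective_of_iIndepFun hmeas hindep fun i x => by simp [hunif],
    ae_tendsto_card_turns_div hmeas hindep hunif] with ω hinj hturns
  exact hturns.div_natCast_of_abs_sub_le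
    ((eventually_ge_atTop 1).mono fun _ hn => abs_LAon_Icc_sub_card_turns_le hinj hn)

end
end

section
/- Let μ be a probability measure supported on the finite set [q] = {1,…,q}, with at least two atoms. Then (1/2)·(1 − Σ_{x∈[q]} p_x²) ≤ Osc(μ) ≤ (2/3)·(1 − Σ_{x∈[q]} p_x³). -/
open MeasureTheory Finset

noncomputable section

/-- `L_x = Σ_{y < x} p_y`. -/
def Lbelow {q : ℕ} (p : Fin q → ℝ) (x : Fin q) : ℝ :=
  ∑ y ∈ Finset.univ.filter (fun y => y < x), p y

/-- `U_x = Σ_{y > x} p_y`. -/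
def Uabove {q : ℕ} (p : Fin q → ℝ) (x : Fin q) : ℝ :=
  ∑ y ∈ Finset.univ.filter (fun y => x < y), p y

/-- The total oscillation `Osc(μ) = Σ_x (L_x² + U_x²)/(L_x + U_x) · p_x`
(terms with `L_x + U_x = 0` being `0`, as division by `0` yields `0`). -/
def Osc {q : ℕ} (p : Fin q → ℝ) : ℝ :=
  ∑ x, (Lbelow p x ^ 2 + Uabove p x ^ 2) / (Lbelow p x + Uabove p x) * p x

/-! Writing `L = L_x`, `U = U_x`, we have `L + p_x + U = 1`. The lower bound is the pointwise
inequality `(L² + U²)/(L + U) ≥ (L + U)/2`. For the upper bound, `L + U ≤ 1` gives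
`(L² + U²)/(L + U) = L + U - 2LU/(L + U) ≤ L + U - 2LU`, and `Σ_x p_x L_x U_x` is the third
elementary symmetric polynomial `(1 - 3 Σ p_x² + 2 Σ p_x³)/6` of the weights; this follows,
like `Σ_x p_x L_x = (1 - Σ p_x²)/2`, by telescoping `Σ_x (g(L_x + p_x) - g(L_x)) = g(1) - g(0)`
for `g(t) = t²` and `g(t) = t³`. -/

theorem Fin.sum_comp_sum_Iio_add_sub_comp_sum_Iio {M N : Type*} [AddCommMonoid M]
    [AddCommGroup N] :
    ∀ {q : ℕ} (f : Fin q → M) (g : M → N),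
      ∑ x, (g (∑ y ∈ Iio x, f y + f x) - g (∑ y ∈ Iio x, f y)) = g (∑ x, f x) - g 0
  | 0, _, _ => by simp
  | n + 1, f, g => by
    have ih := Fin.sum_comp_sum_Iio_add_sub_comp_sum_Iio (fun i : Fin n => f i.castSucc) g
    have h_last : ∑ y ∈ Iio (Fin.last n), f y = ∑ i : Fin n, f i.castSucc := by
      simp [Fin.Iio_last_eq_map]
    simp only [Fin.sum_univ_castSucc, Fin.sum_Iio_castSucc, ih, h_last]
    abel

section

variable {q : ℕ} (p : Fin q → ℝ)

lemma Lbelow_eq_sum_Iio (x : Fin q) : Lbelow p x = ∑ y ∈ Iio x, p y := by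
  rw [Lbelow, filter_gt_eq_Iio]

lemma Uabove_eq_sum_Ioi (x : Fin q) : Uabove p x = ∑ y ∈ Ioi x, p y := by
  rw [Uabove, filter_lt_eq_Ioi]

lemma Lbelow_add_self_add_Uabove (x : Fin q) :
    Lbelow p x + p x + Uabove p x = ∑ y, p y := by
  rw [Lbelow_eq_sum_Iio, sum_Iio_add_eq_sum_Iic, Uabove_eq_sum_Ioi,
    ← sum_filter_add_sum_filter_not univ (· ≤ x)]
  simp only [filter_ge_eq_Iic, not_le, filter_lt_eq_Ioi]

lemma sum_comp_Lbelow_add_self_sub (g : ℝ → ℝ) :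
    ∑ x, (g (Lbelow p x + p x) - g (Lbelow p x)) = g (∑ x, p x) - g 0 := by
  simp only [Lbelow_eq_sum_Iio]
  exact Fin.sum_comp_sum_Iio_add_sub_comp_sum_Iio p g

lemma two_mul_sum_mul_Lbelow_add_sum_sq :
    2 * ∑ x, p x * Lbelow p x + ∑ x, p x ^ 2 = (∑ x, p x) ^ 2 := by
  have h := sum_comp_Lbelow_add_self_sub p (· ^ 2)
  rw [zero_pow two_ne_zero, sub_zero] at h
  rw [← h, mul_sum, ← sum_add_distrib]
  exact sum_congr rfl fun x _ => by ring

lemma three_mul_sum_mul_Lbelow_add_sum_cube :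
    3 * ∑ x, (p x ^ 2 * Lbelow p x + p x * Lbelow p x ^ 2) + ∑ x, p x ^ 3
      = (∑ x, p x) ^ 3 := by
  have h := sum_comp_Lbelow_add_self_sub p (· ^ 3)
  rw [zero_pow three_ne_zero, sub_zero] at h
  rw [← h, mul_sum, ← sum_add_distrib]
  exact sum_congr rfl fun x _ => by ring

lemma six_mul_sum_mul_Lbelow_mul_Uabove :
    6 * ∑ x, p x * Lbelow p x * Uabove p x
      = (∑ x, p x) ^ 3 - 3 * (∑ x, p x) * ∑ x, p x ^ 2 + 2 * ∑ x, p x ^ 3 := by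
  have h : ∑ x, p x * Lbelow p x * Uabove p x = ∑ x, ((∑ y, p y) * (p x * Lbelow p x)
      - (p x ^ 2 * Lbelow p x + p x * Lbelow p x ^ 2)) :=
    sum_congr rfl fun x _ => by
      linear_combination p x * Lbelow p x * Lbelow_add_self_add_Uabove p x
  rw [h, sum_sub_distrib, ← mul_sum]
  linear_combination (3 * ∑ x, p x) * two_mul_sum_mul_Lbelow_add_sum_sq p
    - 2 * three_mul_sum_mul_Lbelow_add_sum_cube p

end

lemma half_add_le_sq_add_sq_div_add {a b : ℝ} (hab : 0 ≤ a + b) :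
    (a + b) / 2 ≤ (a ^ 2 + b ^ 2) / (a + b) := by
  rcases hab.eq_or_lt with hab | hab
  · simp [← hab]
  · rw [le_div_iff₀ hab]
    nlinarith [sq_nonneg (a - b)]

lemma sq_add_sq_div_add_le {a b : ℝ} (ha : 0 ≤ a) (hb : 0 ≤ b) (hab : a + b ≤ 1) :
    (a ^ 2 + b ^ 2) / (a + b) ≤ a + b - 2 * a * b := by
  rcases (add_nonneg ha hb).eq_or_lt with hab0 | hab0
  · obtain ⟨rfl, rfl⟩ : a = 0 ∧ b = 0 := ⟨by linarith, by linarith⟩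
    simp
  · rw [div_le_iff₀ hab0]
    nlinarith [mul_nonneg ha hb]

section

variable {q : ℕ} {p : Fin q → ℝ}

lemma Lbelow_nonneg (hp : ∀ x, 0 ≤ p x) (x : Fin q) : 0 ≤ Lbelow p x :=
  sum_nonneg fun y _ => hp y

lemma Uabove_nonneg (hp : ∀ x, 0 ≤ p x) (x : Fin q) : 0 ≤ Uabove p x :=
  sum_nonneg fun y _ => hp y

lemma Lbelow_add_Uabove_of_sum_eq_one (hsum : ∑ x, p x = 1) (x : Fin q) :
    Lbelow p x + Uabove p x = 1 - p x := by
  linarith [Lbelow_add_self_add_Uabove p x]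

variable (hp : ∀ x, 0 ≤ p x) (hsum : ∑ x, p x = 1)
include hp hsum

lemma half_mul_one_sub_sum_sq_le_Osc : (1 / 2) * (1 - ∑ x, p x ^ 2) ≤ Osc p := by
  calc (1 / 2) * (1 - ∑ x, p x ^ 2)
      = ∑ x, (Lbelow p x + Uabove p x) / 2 * p x := by
        have h : ∀ x, (Lbelow p x + Uabove p x) / 2 * p x = 1 / 2 * (p x - p x ^ 2) := fun x => by
          rw [Lbelow_add_Uabove_of_sum_eq_one hsum]
          ring
        rw [sum_congr rfl fun x _ => h x, ← mul_sum, sum_sub_distrib, hsum]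
    _ ≤ Osc p := sum_le_sum fun x _ => mul_le_mul_of_nonneg_right
        (half_add_le_sq_add_sq_div_add (add_nonneg (Lbelow_nonneg hp x) (Uabove_nonneg hp x)))
        (hp x)

lemma Osc_le_two_thirds_mul_one_sub_sum_cube : Osc p ≤ (2 / 3) * (1 - ∑ x, p x ^ 3) := by
  calc Osc p
      ≤ ∑ x, (Lbelow p x + Uabove p x - 2 * Lbelow p x * Uabove p x) * p x :=
        sum_le_sum fun x _ => mul_le_mul_of_nonneg_right
          (sq_add_sq_div_add_le (Lbelow_nonneg hp x) (Uabove_nonneg hp x)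
            (by linarith [Lbelow_add_Uabove_of_sum_eq_one hsum x, hp x])) (hp x)
    _ = ∑ x, (p x - p x ^ 2) - 2 * ∑ x, p x * Lbelow p x * Uabove p x := by
        rw [mul_sum, ← sum_sub_distrib]
        refine sum_congr rfl fun x _ => ?_
        rw [Lbelow_add_Uabove_of_sum_eq_one hsum]
        ring
    _ = (2 / 3) * (1 - ∑ x, p x ^ 3) := by
        have h := six_mul_sum_mul_Lbelow_mul_Uabove p
        rw [hsum] at h
        rw [sum_sub_distrib]
        linear_combination (-1 / 3 : ℝ) * h + hsum

end

theorem stmt11_general (q : ℕ) (μ : Measure (Fin q)) [IsProbabilityMeasure μ] :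
    (1 / 2) * (1 - ∑ x, (μ {x}).toReal ^ 2) ≤ Osc (fun x => (μ {x}).toReal)
      ∧ Osc (fun x => (μ {x}).toReal) ≤ (2 / 3) * (1 - ∑ x, (μ {x}).toReal ^ 3) := by
  have hp : ∀ x, 0 ≤ (μ {x}).toReal := fun x => ENNReal.toReal_nonneg
  have hsum : ∑ x, (μ {x}).toReal = 1 := by
    simpa [measureReal_def] using sum_measureReal_singleton (μ := μ) univ
  exact ⟨half_mul_one_sub_sum_sq_le_Osc hp hsum, Osc_le_two_thirds_mul_one_sub_sum_cube hp hsum⟩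

/-- for a probability measure `μ` supported on `[q]` with at
least two atoms, `(1/2)(1 − Σ p_x²) ≤ Osc(μ) ≤ (2/3)(1 − Σ p_x³)`. -/
theorem stmt11 (q : ℕ) (μ : Measure (Fin q)) [IsProbabilityMeasure μ]
    (h2 : ∃ x y : Fin q, x ≠ y ∧ 0 < μ {x} ∧ 0 < μ {y}) :
    (1 / 2) * (1 - ∑ x, (μ {x}).toReal ^ 2) ≤ Osc (fun x => (μ {x}).toReal)
      ∧ Osc (fun x => (μ {x}).toReal) ≤ (2 / 3) * (1 - ∑ x, (μ {x}).toReal ^ 3) :=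
  stmt11_general q μ

end
end

section
/- Let a = (aᵢ)_{i∈ℤ} be a bilateral sequence of i.i.d. random variables with common distribution μ supported on [q] = {1,…,q}. For n ≥ 1 and 1 ≤ t ≤ n, let C_{n,t} be the event {a_{−n} = a_{−n+1} = ⋯ = a_{−n+t−1} ≠ a_{−n+t}}. Let F_{≥0} be the σ-field generated by the random variables T^{(k)}f = 2·1(a has a local maximum at index k) for k ≥ 0, and let G_{<−n} be the σ-field generated by {aᵢ : i < −n}. Then for any event A ∈ F_{≥0} and any t ≤ n, the event C_{n,t} ∩ A is independent of G_{<−n}. -/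
open MeasureTheory ProbabilityTheory Filter Finset

noncomputable section

attribute [local instance] Classical.propDecidable

/-- A bilateral sequence `x : ℤ → Fin q` has a local maximum at the index `k`
if for some `j < k`, `x j < x (j+1) = ⋯ = x k > x (k+1)`. -/
def HasLocalMaxZ {q : ℕ} (x : ℤ → Fin q) (k : ℤ) : Prop :=
  ∃ j < k, x j < x k ∧ (∀ i : ℤ, j < i → i ≤ k → x i = x k) ∧ x (k + 1) < x k

/-- `T^{(k)}f (a) = 2·1(a has a local maximum at index k)`. -/
def Tf {q : ℕ} {Ω : Type*} (a : ℤ → Ω → Fin q) (k : ℤ) (ω : Ω) : ℝ :=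
  if HasLocalMaxZ (fun i => a i ω) k then 2 else 0

/-- The σ-field `F_{≥0}` generated by the random variables `T^{(k)}f`, `k ≥ 0`. -/
def Fge0 {q : ℕ} {Ω : Type*} (a : ℤ → Ω → Fin q) : MeasurableSpace Ω :=
  ⨆ k : ℕ, MeasurableSpace.comap (Tf a k) inferInstance

/-- The σ-field `G_{<−n}` generated by the random variables `aᵢ`, `i < −n`. -/
def Glt {q : ℕ} {Ω : Type*} (a : ℤ → Ω → Fin q) (n : ℕ) : MeasurableSpace Ω :=
  ⨆ i : ℤ, ⨆ _ : i < -(n : ℤ), MeasurableSpace.comap (a i) inferInstance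

/-- The event `C_{n,t} = {a_{−n} = ⋯ = a_{−n+t−1} ≠ a_{−n+t}}`. -/
def Cevent {q : ℕ} {Ω : Type*} (a : ℤ → Ω → Fin q) (n t : ℕ) : Set Ω :=
  {ω | (∀ i : ℤ, -(n : ℤ) ≤ i → i ≤ -(n : ℤ) + t - 1 → a i ω = a (-(n : ℤ)) ω)
    ∧ a (-(n : ℤ)) ω ≠ a (-(n : ℤ) + t) ω}

/-!
On `C_{n,t}` we have `a_{-n+t-1} ≠ a_{-n+t}` with `-n+t-1 < 0`, so the plateau
`a_{j+1} = ⋯ = a_k` of a local maximum at an index `k ≥ 0` cannot contain both of these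
indices, whence `j ≥ -n+t-1 ≥ -n`. So on `C_{n,t}` each `T^{(k)}f`, `k ≥ 0`, agrees with the
same function of the clamped sequence `i ↦ a_{max(i, -n)}`, which is measurable for
`σ(aᵢ : i ≥ -n)`. Hence `C_{n,t} ∩ A = C_{n,t} ∩ A'` with `A'` in that σ-field, which also
contains `C_{n,t}` and is independent of `G_{<−n}`.
-/

section LocalMax

variable {q : ℕ}

theorem measurable_hasLocalMaxZ (k : ℤ) :
    Measurable fun x : ℤ → Fin q => HasLocalMaxZ x k := by
  unfold HasLocalMaxZ
  fun_prop

theorem measurable_tf {Ω : Type*} {m : MeasurableSpace Ω} {a : ℤ → Ω → Fin q}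
    (ha : ∀ i, Measurable[m] (a i)) (k : ℤ) : Measurable[m] (Tf a k) :=
  Measurable.ite (measurableSet_setOfPred.2 ((measurable_hasLocalMaxZ k).comp
    (measurable_pi_lambda _ ha))) measurable_const measurable_const

theorem HasLocalMaxZ.of_eq_of_ne {x y : ℤ → Fin q} {m k : ℤ} (hmk : m < k)
    (hm : x m ≠ x (m + 1)) (hxy : ∀ i, m ≤ i → x i = y i) (h : HasLocalMaxZ x k) :
    HasLocalMaxZ y k := by
  obtain ⟨j, hjk, hlt, hplateau, hlt'⟩ := h
  have hmj : m ≤ j := by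
    by_contra! hjm
    exact hm ((hplateau m hjm hmk.le).trans (hplateau (m + 1) (by omega) (by omega)).symm)
  have hk := hxy k (by omega)
  refine ⟨j, hjk, ?_, fun i hji hik => ?_, ?_⟩
  · rwa [← hxy j hmj, ← hk]
  · rw [← hxy i (by omega), ← hk]
    exact hplateau i hji hik
  · rwa [← hxy (k + 1) (by omega), ← hk]

theorem hasLocalMaxZ_congr {x y : ℤ → Fin q} {m k : ℤ} (hmk : m < k)
    (hm : x m ≠ x (m + 1)) (hxy : ∀ i, m ≤ i → x i = y i) :
    HasLocalMaxZ x k ↔ HasLocalMaxZ y k :=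
  ⟨HasLocalMaxZ.of_eq_of_ne hmk hm hxy,
    HasLocalMaxZ.of_eq_of_ne hmk (by rwa [← hxy m le_rfl, ← hxy (m + 1) (by omega)])
      fun i hi => (hxy i hi).symm⟩

end LocalMax

theorem exists_inter_eq_inter_of_eqOn {ι Ω β : Type*} [MeasurableSpace β]
    {m : MeasurableSpace Ω} {C : Set Ω} {f g : ι → Ω → β}
    (hg : ∀ k, Measurable[m] (g k)) (hfg : ∀ k, Set.EqOn (f k) (g k) C) {A : Set Ω}
    (hA : MeasurableSet[⨆ k, MeasurableSpace.comap (f k) ‹_›] A) :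
    ∃ A', MeasurableSet[m] A' ∧ C ∩ A = C ∩ A' := by
  -- compare the traces on `C`, where `f k` and `g k` are the same function
  have hle :
      MeasurableSpace.comap ((↑) : C → Ω) (⨆ k, MeasurableSpace.comap (f k) ‹_›) ≤
        MeasurableSpace.comap ((↑) : C → Ω) m := by
    rw [MeasurableSpace.comap_iSup]
    refine iSup_le fun k => ?_
    rw [MeasurableSpace.comap_comp, ← measurable_iff_comap_le]
    have hfg' : f k ∘ (↑) = g k ∘ ((↑) : C → Ω) := funext fun ω => hfg k ω.2
    exact hfg' ▸ (hg k).comp (comap_measurable _)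
  obtain ⟨A', hA', hpre⟩ := hle _ ⟨A, hA, rfl⟩
  exact ⟨A', hA', Subtype.preimage_coe_eq_preimage_coe_iff.1 hpre.symm⟩

section Sequence

variable {q : ℕ} {Ω : Type*}

def Gge (a : ℤ → Ω → Fin q) (n : ℕ) : MeasurableSpace Ω :=
  ⨆ i : ℤ, ⨆ _ : -(n : ℤ) ≤ i, MeasurableSpace.comap (a i) inferInstance

theorem measurable_Gge {a : ℤ → Ω → Fin q} {n : ℕ} {i : ℤ} (hi : -(n : ℤ) ≤ i) :
    Measurable[Gge a n] (a i) :=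
  measurable_iff_comap_le.2 (le_iSup₂_of_le i hi le_rfl)

theorem indep_Gge_Glt [MeasurableSpace Ω] {a : ℤ → Ω → Fin q} {P : Measure Ω}
    (hmeas : ∀ i, Measurable (a i)) (hindep : iIndepFun a P) (n : ℕ) :
    Indep (Gge a n) (Glt a n) P :=
  indep_iSup_of_disjoint (fun i => (hmeas i).comap_le) hindep.iIndep
    (S := {i | -(n : ℤ) ≤ i}) (T := {i | i < -(n : ℤ)})
    (Set.disjoint_left.2 fun _ hi => by simpa using hi)

theorem measurableSet_cevent {m : MeasurableSpace Ω} {a : ℤ → Ω → Fin q}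
    (ha : ∀ i, Measurable[m] (a i)) (n t : ℕ) : MeasurableSet[m] (Cevent a n t) :=
  measurable_pi_lambda _ ha (by measurability : MeasurableSet {x : ℤ → Fin q |
    (∀ i : ℤ, -(n : ℤ) ≤ i → i ≤ -(n : ℤ) + t - 1 → x i = x (-(n : ℤ))) ∧
      x (-(n : ℤ)) ≠ x (-(n : ℤ) + t)})

theorem cevent_clamp (a : ℤ → Ω → Fin q) (n t : ℕ) :
    Cevent (fun i => a (max i (-(n : ℤ)))) n t = Cevent a n t := by
  ext ω
  have hclamp : ∀ i, -(n : ℤ) ≤ i → a (max i (-(n : ℤ))) ω = a i ω := fun i hi => by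
    rw [max_eq_left hi]
  simp only [Cevent, Set.mem_ofPred_eq, max_self, hclamp (-(n : ℤ) + t) (by omega)]
  exact and_congr_left' (forall_congr' fun i => forall_congr' fun hi => by rw [hclamp i hi])

theorem tf_eq_tf_clamp_of_mem_cevent {a : ℤ → Ω → Fin q} {n t : ℕ} (ht1 : 1 ≤ t)
    (htn : t ≤ n) {ω : Ω} (hω : ω ∈ Cevent a n t) (k : ℕ) :
    Tf a k ω = Tf (fun i => a (max i (-(n : ℤ)))) k ω := by
  have hbreak : a (-(n : ℤ) + t - 1) ω ≠ a (-(n : ℤ) + t - 1 + 1) ω := by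
    rw [sub_add_cancel, hω.1 _ (by omega) le_rfl]
    exact hω.2
  refine if_congr (hasLocalMaxZ_congr (by omega) hbreak fun i hi => ?_) rfl rfl
  simp only [max_eq_left (show -(n : ℤ) ≤ i by omega)]

end Sequence

theorem stmt14_general
    {Ω : Type*} [MeasurableSpace Ω] (P : Measure Ω)
    (q : ℕ)
    (a : ℤ → Ω → Fin q)
    (hmeas : ∀ i, Measurable (a i))
    (hindep : iIndepFun a P)
    (n t : ℕ) (ht1 : 1 ≤ t) (htn : t ≤ n)
    (A : Set Ω) (hA : MeasurableSet[Fge0 a] A) :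
    ∀ B : Set Ω, MeasurableSet[Glt a n] B →
      P ((Cevent a n t ∩ A) ∩ B) = P (Cevent a n t ∩ A) * P B := by
  intro B hB
  have hclamp : ∀ i, Measurable[Gge a n] (a (max i (-(n : ℤ)))) :=
    fun i => measurable_Gge (le_max_right _ _)
  obtain ⟨A', hA', hCA⟩ := exists_inter_eq_inter_of_eqOn
    (f := fun k : ℕ => Tf a k) (fun k => measurable_tf hclamp k)
    (fun k _ hω => tf_eq_tf_clamp_of_mem_cevent ht1 htn hω k) hA
  have hC : MeasurableSet[Gge a n] (Cevent a n t) :=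
    cevent_clamp a n t ▸ measurableSet_cevent hclamp n t
  rw [hCA]
  exact (Indep_iff _ _ _).1 (indep_Gge_Glt hmeas hindep n) _ _ (hC.inter hA') hB

/-- for a bilateral i.i.d. sequence with common distribution `μ`
supported on `[q]`, any `A ∈ F_{≥0}` and any `1 ≤ t ≤ n`, the event
`C_{n,t} ∩ A` is independent of the σ-field `G_{<−n}`. -/
theorem stmt14
    {Ω : Type*} [MeasurableSpace Ω] (P : Measure Ω) [IsProbabilityMeasure P]
    (q : ℕ) (μ : Measure (Fin q)) [IsProbabilityMeasure μ]
    (a : ℤ → Ω → Fin q)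
    (hmeas : ∀ i, Measurable (a i))
    (hindep : iIndepFun a P)
    (hid : ∀ i, Measure.map (a i) P = μ)
    (n t : ℕ) (ht1 : 1 ≤ t) (htn : t ≤ n)
    (A : Set Ω) (hA : MeasurableSet[Fge0 a] A) :
    ∀ B : Set Ω, MeasurableSet[Glt a n] B →
      P ((Cevent a n t ∩ A) ∩ B) = P (Cevent a n t ∩ A) * P B :=
  stmt14_general P q a hmeas hindep n t ht1 htn A hA

end
end

section
/- Let (x_k)_{k≥0} be an ergodic Markov chain on the finite linearly ordered state space [q] = {1,…,q}, with transition probabilities p_{r,s} (with p_{r,r} < 1 for all r) and stationary distribution π, started at stationarity. Define (y_k)_{k≥0} by y₀ = 1; y_{k+1} = 1 if x_{k+1} > x_k, or if x_{k+1} = x_k and y_k = 1; y_{k+1} = −1 if x_{k+1} < x_k, or if x_{k+1} = x_k and y_k = −1. Then the process (x_k, y_k)_{k≥0} is a Markov chain with transition probabilities p_{(r,±1)→(s,1)} = p_{r,s}·1(s > r), p_{(r,1)→(r,1)} = p_{r,r}, p_{(r,±1)→(s,−1)} = p_{r,s}·1(s < r), p_{(r,−1)→(r,−1)} = p_{r,r},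 and the measure given by π_{(r,1)} = (1 − p_{r,r})^{-1}·Σ_{s<r} π_s p_{s,r} and π_{(r,−1)} = (1 − p_{r,r})^{-1}·Σ_{s>r} π_s p_{s,r} is stationary for this chain. -/
/-!
The gradient `y_{k+1}` is computed from `(x_k, y_k, x_{k+1})` alone, so the gradient history is a
function of the state history: a lifted history either has probability zero or is the event of
its state history, and the Markov property of `x` transfers, `Qtrans p (r, b) (s, e)` being `p r s`
exactly when `e` is the updated gradient. For stationarity, the lifted mass at `r` is `π r`,
since stationarity of `π` at `r` says the inflow from below and from above sum to
`π r (1 - p r r)`; the mass entering `(s, 1)` is then the inflow from below plus what `(s, 1)`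
holds, which is the defining equation of `piLift`.
-/

open MeasureTheory ProbabilityTheory Filter Finset

noncomputable section

/-- The gradient process `(y_k)`: `y₀ = 1` (here `true`); `y_{k+1} = 1` if
`x_{k+1} > x_k`, or if `x_{k+1} = x_k` and `y_k = 1`; `y_{k+1} = −1` (here
`false`) if `x_{k+1} < x_k`, or if `x_{k+1} = x_k` and `y_k = −1`. -/
def ygrad {Ω : Type*} {q : ℕ} (x : ℕ → Ω → Fin q) : ℕ → Ω → Bool
  | 0, _ => true
  | k + 1, ω =>
    if x k ω < x (k + 1) ω then true
    else if x (k + 1) ω < x k ω then false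
    else ygrad x k ω

/-- The transition probabilities of the lifted chain `(x_k, y_k)`:
`p_{(r,±1)→(s,1)} = p_{r,s}·1(s > r)`, `p_{(r,1)→(r,1)} = p_{r,r}`,
`p_{(r,±1)→(s,−1)} = p_{r,s}·1(s < r)`, `p_{(r,−1)→(r,−1)} = p_{r,r}`. -/
def Qtrans {q : ℕ} (p : Fin q → Fin q → ℝ) : Fin q × Bool → Fin q × Bool → ℝ :=
  fun re se' =>
    if se'.2 then (if re.1 < se'.1 ∨ (re.1 = se'.1 ∧ re.2 = true) then p re.1 se'.1 else 0)
    else (if se'.1 < re.1 ∨ (re.1 = se'.1 ∧ re.2 = false) then p re.1 se'.1 else 0)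

/-- The measure `π_{(r,1)} = (1 − p_{r,r})⁻¹ Σ_{s<r} π_s p_{s,r}`,
`π_{(r,−1)} = (1 − p_{r,r})⁻¹ Σ_{s>r} π_s p_{s,r}` on the lifted state space. -/
def piLift {q : ℕ} (p : Fin q → Fin q → ℝ) (π : Fin q → ℝ) : Fin q × Bool → ℝ :=
  fun re =>
    if re.2 then (1 - p re.1 re.1)⁻¹ * ∑ s ∈ Finset.univ.filter (fun s => s < re.1), π s * p s re.1
    else (1 - p re.1 re.1)⁻¹ * ∑ s ∈ Finset.univ.filter (fun s => re.1 < s), π s * p s re.1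

def gradStep {α : Type*} [LinearOrder α] (r : α) (b : Bool) (s : α) : Bool :=
  if r < s then true else if s < r then false else b

def gradPath {α : Type*} [LinearOrder α] (h : ℕ → α) : ℕ → Bool
  | 0 => true
  | k + 1 => gradStep (h k) (gradPath h k) (h (k + 1))

lemma gradPath_congr {α : Type*} [LinearOrder α] {h h' : ℕ → α} {k : ℕ}
    (hh : ∀ j ≤ k, h j = h' j) : gradPath h k = gradPath h' k := by
  induction k with
  | zero => rfl
  | succ k ih =>
    simp only [gradPath, hh k (by omega), hh (k + 1) le_rfl, ih fun j hj => hh j (by omega)]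

lemma ygrad_eq_gradPath {Ω : Type*} {q : ℕ} (x : ℕ → Ω → Fin q) (ω : Ω) (k : ℕ) :
    ygrad x k ω = gradPath (fun j => x j ω) k := by
  induction k with
  | zero => rfl
  | succ k ih => simp only [ygrad, gradPath, gradStep, ih]

lemma Qtrans_eq_ite {q : ℕ} (p : Fin q → Fin q → ℝ) (r : Fin q) (b : Bool) (s : Fin q)
    (e : Bool) : Qtrans p (r, b) (s, e) = if e = gradStep r b s then p r s else 0 := by
  rcases lt_trichotomy r s with h | rfl | h
  · cases e <;> simp [Qtrans, gradStep, h, h.ne, h.not_gt]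
  · cases e <;> cases b <;> simp [Qtrans, gradStep]
  · cases e <;> simp [Qtrans, gradStep, h, h.ne', h.not_gt]

section LiftedChain

variable {Ω : Type*} {q : ℕ} (x : ℕ → Ω → Fin q) (k : ℕ) (h : ℕ → Fin q × Bool)

lemma setOf_lift_history :
    {ω | ∀ j ≤ k, (x j ω, ygrad x j ω) = h j}
      = if ∀ j ≤ k, (h j).2 = gradPath (fun j => (h j).1) j
        then {ω | ∀ j ≤ k, x j ω = (h j).1} else ∅ := by
  split_ifs with hcons
  · ext ω
    simp only [Set.mem_ofPred_eq, Prod.ext_iff]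
    refine ⟨fun hω j hj => (hω j hj).1, fun hω j hj => ⟨hω j hj, ?_⟩⟩
    rw [hcons j hj, ygrad_eq_gradPath]
    exact gradPath_congr fun i hi => hω i (hi.trans hj)
  · refine Set.eq_empty_of_forall_notMem fun ω hω => hcons fun j hj => ?_
    simp only [Set.mem_ofPred_eq, Prod.ext_iff] at hω
    rw [← (hω j hj).2, ygrad_eq_gradPath]
    exact gradPath_congr fun i hi => (hω i (hi.trans hj)).1

lemma setOf_lift_step (s : Fin q) (e : Bool) :
    {ω | (x (k + 1) ω, ygrad x (k + 1) ω) = (s, e) ∧ ∀ j ≤ k, (x j ω, ygrad x j ω) = h j}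
      = if e = gradStep (h k).1 (h k).2 s
        then {ω | x (k + 1) ω = s ∧ ∀ j ≤ k, (x j ω, ygrad x j ω) = h j} else ∅ := by
  have hstep : ∀ ω, (∀ j ≤ k, (x j ω, ygrad x j ω) = h j) →
      ygrad x (k + 1) ω = gradStep (h k).1 (h k).2 (x (k + 1) ω) := fun ω hω => by
    rw [← hω k le_rfl]
    rfl
  split_ifs with he
  · ext ω
    simp only [Set.mem_ofPred_eq, Prod.mk.injEq]
    exact ⟨fun ⟨⟨hs, _⟩, hω⟩ => ⟨hs, hω⟩,
      fun ⟨hs, hω⟩ => ⟨⟨hs, by rw [hstep ω hω, hs, he]⟩, hω⟩⟩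
  · refine Set.eq_empty_of_forall_notMem fun ω ⟨hse, hω⟩ => he ?_
    simp only [Prod.mk.injEq] at hse
    rw [← hse.2, hstep ω hω, hse.1]

variable [MeasurableSpace Ω] (P : Measure Ω) (p : Fin q → Fin q → ℝ)

lemma measure_succ_inter_lift_history
    (hmarkov : ∀ (k : ℕ) (h : ℕ → Fin q) (s : Fin q),
      (P {ω | x (k + 1) ω = s ∧ ∀ j ≤ k, x j ω = h j}).toReal
        = p (h k) s * (P {ω | ∀ j ≤ k, x j ω = h j}).toReal) (s : Fin q) :
    (P {ω | x (k + 1) ω = s ∧ ∀ j ≤ k, (x j ω, ygrad x j ω) = h j}).toReal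
      = p (h k).1 s * (P {ω | ∀ j ≤ k, (x j ω, ygrad x j ω) = h j}).toReal := by
  change (P ({ω | x (k + 1) ω = s} ∩ {ω | ∀ j ≤ k, (x j ω, ygrad x j ω) = h j})).toReal = _
  rw [setOf_lift_history]
  split_ifs
  · exact hmarkov k (fun j => (h j).1) s
  · simp

lemma measure_lift_step
    (hmarkov : ∀ (k : ℕ) (h : ℕ → Fin q) (s : Fin q),
      (P {ω | x (k + 1) ω = s ∧ ∀ j ≤ k, x j ω = h j}).toReal
        = p (h k) s * (P {ω | ∀ j ≤ k, x j ω = h j}).toReal) (s : Fin q) (e : Bool) :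
    (P {ω | (x (k + 1) ω, ygrad x (k + 1) ω) = (s, e)
          ∧ ∀ j ≤ k, (x j ω, ygrad x j ω) = h j}).toReal
      = Qtrans p (h k) (s, e) * (P {ω | ∀ j ≤ k, (x j ω, ygrad x j ω) = h j}).toReal := by
  rw [setOf_lift_step, Qtrans_eq_ite]
  split_ifs
  · exact measure_succ_inter_lift_history x k h P p hmarkov s
  · simp

end LiftedChain

lemma Finset.sum_eq_sum_filter_lt_add_add_sum_filter_gt {α M : Type*} [Fintype α] [LinearOrder α]
    [AddCommMonoid M] (f : α → M) (r : α) :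
    ∑ t, f t = ∑ t ∈ univ.filter (· < r), f t + f r + ∑ t ∈ univ.filter (r < ·), f t := by
  have hsplit : ∀ t, f t = (if t < r then f t else 0) + (if t = r then f t else 0)
      + (if r < t then f t else 0) := fun t => by
    rcases lt_trichotomy t r with h | rfl | h
    · simp [h, h.ne, h.not_gt]
    · simp
    · simp [h, h.ne', h.not_gt]
  rw [sum_congr rfl fun t _ => hsplit t]
  simp only [sum_add_distrib, ← sum_filter, filter_eq', mem_univ, if_true, sum_singleton]

section Stationarity

variable {q : ℕ} (p : Fin q → Fin q → ℝ)

lemma sum_mul_Qtrans_true (μ : Fin q × Bool → ℝ) (s : Fin q) :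
    ∑ re, μ re * Qtrans p re (s, true)
      = ∑ r ∈ univ.filter (· < s), (μ (r, true) + μ (r, false)) * p r s
        + μ (s, true) * p s s := by
  have below : ∀ r ∈ univ.filter (· < s), ∑ b, μ (r, b) * Qtrans p (r, b) (s, true)
      = (μ (r, true) + μ (r, false)) * p r s := fun r hr => by
    replace hr := (mem_filter.mp hr).2
    simp [Qtrans_eq_ite, gradStep, hr, add_mul]
  have above : ∀ r ∈ univ.filter (s < ·), ∑ b, μ (r, b) * Qtrans p (r, b) (s, true) = 0 :=
    fun r hr => by
      replace hr := (mem_filter.mp hr).2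
      simp [Qtrans_eq_ite, gradStep, hr, hr.not_gt]
  rw [Fintype.sum_prod_type, Finset.sum_eq_sum_filter_lt_add_add_sum_filter_gt _ s,
    sum_congr rfl below, sum_eq_zero above, add_zero]
  simp [Qtrans_eq_ite, gradStep]

lemma sum_mul_Qtrans_false (μ : Fin q × Bool → ℝ) (s : Fin q) :
    ∑ re, μ re * Qtrans p re (s, false)
      = ∑ r ∈ univ.filter (s < ·), (μ (r, true) + μ (r, false)) * p r s
        + μ (s, false) * p s s := by
  have below : ∀ r ∈ univ.filter (· < s), ∑ b, μ (r, b) * Qtrans p (r, b) (s, false) = 0 :=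
    fun r hr => by
      replace hr := (mem_filter.mp hr).2
      simp [Qtrans_eq_ite, gradStep, hr]
  have above : ∀ r ∈ univ.filter (s < ·), ∑ b, μ (r, b) * Qtrans p (r, b) (s, false)
      = (μ (r, true) + μ (r, false)) * p r s := fun r hr => by
    replace hr := (mem_filter.mp hr).2
    simp [Qtrans_eq_ite, gradStep, hr, hr.not_gt, add_mul]
  rw [Fintype.sum_prod_type, Finset.sum_eq_sum_filter_lt_add_add_sum_filter_gt _ s,
    sum_congr rfl below, sum_congr rfl above, sum_const_zero, zero_add, add_comm]
  simp [Qtrans_eq_ite, gradStep]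

variable {p} {π : Fin q → ℝ} (hpdiag : ∀ r, p r r < 1) (hπstat : ∀ s, ∑ r, π r * p r s = π s)
include hpdiag hπstat

lemma piLift_true_add_piLift_false (r : Fin q) :
    piLift p π (r, true) + piLift p π (r, false) = π r := by
  have hflow := hπstat r
  rw [Finset.sum_eq_sum_filter_lt_add_add_sum_filter_gt _ r] at hflow
  have : 1 - p r r ≠ 0 := sub_ne_zero.mpr (hpdiag r).ne'
  simp only [piLift, ↓reduceIte, Bool.false_eq_true]
  field_simp
  linarith

lemma piLift_stationary (se : Fin q × Bool) :
    ∑ re, piLift p π re * Qtrans p re se = piLift p π se := by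
  obtain ⟨s, _ | _⟩ := se
  · rw [sum_mul_Qtrans_false]
    simp only [piLift_true_add_piLift_false hpdiag hπstat]
    simp only [piLift, Bool.false_eq_true, ↓reduceIte]
    field_simp [sub_ne_zero.mpr (hpdiag s).ne']
    ring
  · rw [sum_mul_Qtrans_true]
    simp only [piLift_true_add_piLift_false hpdiag hπstat]
    simp only [piLift, ↓reduceIte]
    field_simp [sub_ne_zero.mpr (hpdiag s).ne']
    ring

end Stationarity

theorem stmt18_general
    {Ω : Type*} [MeasurableSpace Ω] (P : Measure Ω)
    (q : ℕ) (p : Fin q → Fin q → ℝ)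
    (hpdiag : ∀ r, p r r < 1)
    (π : Fin q → ℝ)
    (hπstat : ∀ s, ∑ r, π r * p r s = π s)
    (x : ℕ → Ω → Fin q)
    -- Markov property of `(x_k)` with transition probabilities `p`
    (hmarkov : ∀ (k : ℕ) (h : ℕ → Fin q) (s : Fin q),
      (P {ω | x (k + 1) ω = s ∧ ∀ j ≤ k, x j ω = h j}).toReal
        = p (h k) s * (P {ω | ∀ j ≤ k, x j ω = h j}).toReal) :
    -- the lifted process is Markov with transition probabilities `Qtrans p` ...
    (∀ (k : ℕ) (h : ℕ → Fin q × Bool) (s : Fin q) (e : Bool),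
      (P {ω | (x (k + 1) ω, ygrad x (k + 1) ω) = (s, e)
            ∧ ∀ j ≤ k, (x j ω, ygrad x j ω) = h j}).toReal
        = Qtrans p (h k) (s, e)
          * (P {ω | ∀ j ≤ k, (x j ω, ygrad x j ω) = h j}).toReal)
    -- ... and `piLift p π` is stationary for it
    ∧ (∀ se : Fin q × Bool,
        ∑ re : Fin q × Bool, piLift p π re * Qtrans p re se = piLift p π se) :=
  ⟨fun k h => measure_lift_step x k h P p hmarkov, piLift_stationary hpdiag hπstat⟩

/-- for an ergodic Markov chain `(x_k)` on `[q]` with transition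
probabilities `p` (with `p_{r,r} < 1`), stationary distribution `π`, started at
stationarity, the process `(x_k, y_k)` is a Markov chain with the transition
probabilities `Qtrans p`, and `piLift p π` is a stationary measure for it. -/
theorem stmt18
    {Ω : Type*} [MeasurableSpace Ω] (P : Measure Ω) [IsProbabilityMeasure P]
    (q : ℕ) (p : Fin q → Fin q → ℝ)
    (hp0 : ∀ r s, 0 ≤ p r s) (hprow : ∀ r, ∑ s, p r s = 1)
    (hpdiag : ∀ r, p r r < 1)
    -- ergodicity (irreducible and aperiodic, i.e. primitive)
    (herg : ∃ k : ℕ, ∀ r s, 0 < ((Matrix.of p) ^ k) r s)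
    (π : Fin q → ℝ) (hπ0 : ∀ r, 0 ≤ π r) (hπ1 : ∑ r, π r = 1)
    (hπstat : ∀ s, ∑ r, π r * p r s = π s)
    (x : ℕ → Ω → Fin q) (hxmeas : ∀ k, Measurable (x k))
    -- started at stationarity
    (hstart : ∀ r, (P {ω | x 0 ω = r}).toReal = π r)
    -- Markov property of `(x_k)` with transition probabilities `p`
    (hmarkov : ∀ (k : ℕ) (h : ℕ → Fin q) (s : Fin q),
      (P {ω | x (k + 1) ω = s ∧ ∀ j ≤ k, x j ω = h j}).toReal
        = p (h k) s * (P {ω | ∀ j ≤ k, x j ω = h j}).toReal) :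
    -- the lifted process is Markov with transition probabilities `Qtrans p` ...
    (∀ (k : ℕ) (h : ℕ → Fin q × Bool) (s : Fin q) (e : Bool),
      (P {ω | (x (k + 1) ω, ygrad x (k + 1) ω) = (s, e)
            ∧ ∀ j ≤ k, (x j ω, ygrad x j ω) = h j}).toReal
        = Qtrans p (h k) (s, e)
          * (P {ω | ∀ j ≤ k, (x j ω, ygrad x j ω) = h j}).toReal)
    -- ... and `piLift p π` is stationary for it
    ∧ (∀ se : Fin q × Bool,
        ∑ re : Fin q × Bool, piLift p π re * Qtrans p re se = piLift p π se) :=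
  stmt18_general P q p hpdiag π hπstat x hmarkov

end
end
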